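/- arXiv:1804.05888 — 5 statements merged into one kernel-verified Lean document; each statement's English description precedes it below -/
import Mathlib

section
/- Let a ∈ (0,π) and let K ⊂ ℂ be a compact set. Then the series Σ_{n=0}^∞ (1/c_n) |∫₀^π cos(√z x) R_{aπ}(x) cos(nx) dx|, where c_0 := π and c_n := π/2 for n ≥ 1, converges uniformly for z ∈ K. -/
open MeasureTheory Real Set

/-!
With `w = √z`, the identity `cos (w x) cos (n x) = (cos ((w + n) x) + cos ((w - n) x)) / 2` makes
the `n`-th integral the mean of `J (w + n)` and `J (w - n)`, where `J p = ∫₀^π cos (p x) R(x) dx`.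
Since `R` is `1` on `[0, a]` and affine on `[a, π]` with `R π = 0`, integrating piece by piece gives
`J p = (cos (p a) - cos (p π)) / (p² (π - a))`. On `K` both `|Im (w ± n)| = |Im w|` and `|w|` are
bounded, so `|w ± n| ≥ n / 2` for large `n` and the terms are `O(1 / n²)` uniformly on `K`;
the Weierstrass M-test concludes.
-/

theorem Complex.norm_cos_le_exp_abs_im (z : ℂ) : ‖Complex.cos z‖ ≤ Real.exp |z.im| := by
  have hexp : ∀ w : ℂ, |w.re| = |z.im| → ‖Complex.exp w‖ ≤ Real.exp |z.im| := fun w hw => by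
    rw [Complex.norm_exp, ← hw]
    exact Real.exp_le_exp.2 (le_abs_self _)
  have h₁ := hexp (z * Complex.I) (by simp)
  have h₂ := hexp (-z * Complex.I) (by simp)
  rw [Complex.cos, norm_div, Complex.norm_two]
  linarith [norm_add_le (Complex.exp (z * Complex.I)) (Complex.exp (-z * Complex.I))]

theorem Complex.norm_cos_mul_ofReal_le (p : ℂ) {b x : ℝ} (hx : x ∈ Icc 0 b) :
    ‖Complex.cos (p * x)‖ ≤ Real.exp (|p.im| * b) := by
  refine (Complex.norm_cos_le_exp_abs_im _).trans (Real.exp_le_exp.2 ?_)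
  rw [Complex.mul_im, Complex.ofReal_im, Complex.ofReal_re, mul_zero, zero_add, abs_mul,
    abs_of_nonneg hx.1]
  exact mul_le_mul_of_nonneg_left hx.2 (abs_nonneg _)

theorem integral_cos_mul_mul_sub {p : ℂ} (hp : p ≠ 0) (a b : ℝ) :
    ∫ x in a..b, Complex.cos (p * x) * (b - x) =
      (Complex.cos (p * a) - Complex.cos (p * b)) / p ^ 2 - (b - a) * Complex.sin (p * a) / p := by
  let F : ℂ → ℂ := fun ζ => (b - ζ) * Complex.sin (p * ζ) / p - Complex.cos (p * ζ) / p ^ 2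
  have hF : ∀ x : ℝ, HasDerivAt (fun y : ℝ => F y) (Complex.cos (p * x) * (b - x)) x := by
    intro x
    have h := (((hasDerivAt_id (x : ℂ)).const_sub (b : ℂ)).mul
      (((hasDerivAt_id (x : ℂ)).const_mul p).csin)).div_const p |>.sub
      (((hasDerivAt_id (x : ℂ)).const_mul p).ccos.div_const (p ^ 2))
    refine (h.congr_deriv ?_).comp_ofReal
    field_simp
    simp only [id_eq, sub_neg_eq_add, neg_add_cancel_comm]
    ring
  rw [intervalIntegral.integral_eq_sub_of_hasDerivAt (fun x _ => hF x)
    ((by fun_prop : Continuous _).intervalIntegrable _ _)]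
  simp only [F]
  ring

theorem integral_cos_mul_mul_cos {g : ℝ → ℂ} {u v : ℝ} (hg : IntervalIntegrable g volume u v)
    (w ν : ℂ) :
    ∫ x in u..v, Complex.cos (w * x) * g x * Complex.cos (ν * x) =
      ((∫ x in u..v, Complex.cos ((w + ν) * x) * g x) +
        ∫ x in u..v, Complex.cos ((w - ν) * x) * g x) / 2 := by
  have hint : ∀ c : ℂ, IntervalIntegrable (fun x : ℝ => Complex.cos (c * x) * g x) volume u v :=
    fun c => hg.continuousOn_mul (by fun_prop)
  rw [← intervalIntegral.integral_add (hint _) (hint _), ← intervalIntegral.integral_div]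
  refine intervalIntegral.integral_congr fun x _ => ?_
  simp only [add_mul, sub_mul, Complex.cos_add, Complex.cos_sub]
  ring

-- `ramp a π` is the paper's `R_{aπ}`.
noncomputable def ramp (a b x : ℝ) : ℝ := if x ≤ a then 1 else (b - x) / (b - a)

section Ramp

variable {a b : ℝ}

theorem ramp_of_le {x : ℝ} (hx : x ≤ a) : ramp a b x = 1 := if_pos hx

theorem ramp_of_mem_Icc (hab : a < b) {x : ℝ} (hx : x ∈ Icc a b) :
    ramp a b x = (b - x) / (b - a) := by
  rcases hx.1.eq_or_lt with rfl | hax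
  · rw [ramp_of_le le_rfl, div_self (sub_pos.2 hab).ne']
  · exact if_neg hax.not_ge

theorem continuous_ramp (hab : a < b) : Continuous (ramp a b) :=
  Continuous.if_le continuous_const (by fun_prop) continuous_id continuous_const
    fun x hx => by rw [hx, div_self (sub_pos.2 hab).ne']

theorem integral_cos_mul_ramp (ha : 0 ≤ a) (hab : a < b) {p : ℂ} (hp : p ≠ 0) :
    ∫ x in (0 : ℝ)..b, Complex.cos (p * x) * ramp a b x =
      (Complex.cos (p * a) - Complex.cos (p * b)) / (p ^ 2 * (b - a)) := by
  have hba : (b : ℂ) - a ≠ 0 := by exact_mod_cast (sub_pos.2 hab).ne'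
  have hcont : Continuous fun x : ℝ => Complex.cos (p * x) * ramp a b x := by
    have := continuous_ramp hab
    fun_prop
  have hflat : ∫ x in (0 : ℝ)..a, Complex.cos (p * x) * ramp a b x =
      ∫ x in (0 : ℝ)..a, Complex.cos (p * x) :=
    intervalIntegral.integral_congr fun x hx => by
      rw [ramp_of_le (uIcc_of_le ha ▸ hx).2, Complex.ofReal_one, mul_one]
  have hslope : ∫ x in a..b, Complex.cos (p * x) * ramp a b x =
      (∫ x in a..b, Complex.cos (p * x) * (b - x)) / (b - a) := by
    rw [← intervalIntegral.integral_div]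
    refine intervalIntegral.integral_congr fun x hx => ?_
    rw [ramp_of_mem_Icc hab (uIcc_of_le hab.le ▸ hx)]
    push_cast
    ring
  rw [← intervalIntegral.integral_add_adjacent_intervals (b := a) (hcont.intervalIntegrable _ _)
    (hcont.intervalIntegrable _ _), hflat, hslope, integral_cos_mul_complex hp,
    integral_cos_mul_mul_sub hp, Complex.ofReal_zero, mul_zero, Complex.sin_zero, zero_div,
    sub_zero]
  field_simp
  ring

theorem norm_integral_cos_mul_ramp_le (ha : 0 ≤ a) (hab : a < b) {p : ℂ} (hp : p ≠ 0) :
    ‖∫ x in (0 : ℝ)..b, Complex.cos (p * x) * ramp a b x‖ ≤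
      2 * Real.exp (|p.im| * b) / (‖p‖ ^ 2 * (b - a)) := by
  have hb : b ∈ Icc 0 b := ⟨ha.trans hab.le, le_rfl⟩
  have hnum : ‖Complex.cos (p * a) - Complex.cos (p * b)‖ ≤ 2 * Real.exp (|p.im| * b) := by
    linarith [norm_sub_le (Complex.cos (p * a)) (Complex.cos (p * b)),
      Complex.norm_cos_mul_ofReal_le p ⟨ha, hab.le⟩, Complex.norm_cos_mul_ofReal_le p hb]
  have hden : ‖p ^ 2 * ((b : ℂ) - a)‖ = ‖p‖ ^ 2 * (b - a) := by
    rw [norm_mul, norm_pow, ← Complex.ofReal_sub, Complex.norm_of_nonneg (sub_pos.2 hab).le]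
  rw [integral_cos_mul_ramp ha hab hp, norm_div, hden]
  gcongr

theorem norm_integral_cos_mul_ramp_mul_cos_le (ha : 0 ≤ a) (hab : a < b) (w : ℂ)
    {ν : ℝ} (hν : 0 < ν) (hwν : 2 * ‖w‖ ≤ ν) :
    ‖∫ x in (0 : ℝ)..b, Complex.cos (w * x) * ramp a b x * Complex.cos (ν * x)‖ ≤
      8 * Real.exp (|w.im| * b) / (ν ^ 2 * (b - a)) := by
  have hJ : ∀ p : ℂ, p.im = w.im → ν / 2 ≤ ‖p‖ →
      ‖∫ x in (0 : ℝ)..b, Complex.cos (p * x) * ramp a b x‖ ≤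
        8 * Real.exp (|w.im| * b) / (ν ^ 2 * (b - a)) := by
    intro p hp_im hp_norm
    have hp : p ≠ 0 := norm_pos_iff.1 (by linarith)
    refine (norm_integral_cos_mul_ramp_le ha hab hp).trans ?_
    rw [hp_im, show 8 * Real.exp (|w.im| * b) / (ν ^ 2 * (b - a)) =
      2 * Real.exp (|w.im| * b) / ((ν / 2) ^ 2 * (b - a)) by field_simp; ring]
    have hba := sub_pos.2 hab
    gcongr
  have hνw : ‖(ν : ℂ)‖ = ν := Complex.norm_of_nonneg hν.le
  have hplus := hJ (w + ν) (by simp) (by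
    have := norm_sub_le (w + ν) w
    rw [add_sub_cancel_left, hνw] at this
    linarith)
  have hminus := hJ (w - ν) (by simp) (by
    have := norm_sub_le w (w - ν)
    rw [sub_sub_cancel, hνw] at this
    linarith)
  have hramp : Continuous fun x => (ramp a b x : ℂ) :=
    Complex.continuous_ofReal.comp (continuous_ramp hab)
  rw [integral_cos_mul_mul_cos (hramp.intervalIntegrable _ _), norm_div, Complex.norm_two]
  linarith [norm_add_le (∫ x in (0 : ℝ)..b, Complex.cos ((w + ν) * x) * ramp a b x)
    (∫ x in (0 : ℝ)..b, Complex.cos ((w - ν) * x) * ramp a b x)]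

end Ramp

theorem Complex.norm_cpow_one_half (z : ℂ) : ‖z ^ (1 / 2 : ℂ)‖ = √‖z‖ := by
  rw [show (1 / 2 : ℂ) = ((1 / 2 : ℝ) : ℂ) by push_cast; rfl, Complex.norm_cpow_real,
    Real.sqrt_eq_rpow]

/-- Oversampling convergence hypothesis in the free case `V ≡ 0`: for `a ∈ (0,π)` and
compact `K ⊂ ℂ`, the series `Σₙ (1/cₙ) |∫₀^π cos(√z x) R_{aπ}(x) cos(nx) dx|`
(with `c₀ = π`, `cₙ = π/2` for `n ≥ 1`) converges uniformly on `K`. -/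
theorem free_oversampling_hypothesis
    (a : ℝ) (ha0 : 0 < a) (haπ : a < π)
    (K : Set ℂ) (hK : IsCompact K) :
    ∃ S : ℂ → ℝ, TendstoUniformlyOn
      (fun (N : ℕ) (z : ℂ) => ∑ n ∈ Finset.range N,
        (1 / (if n = 0 then π else π / 2)) *
          ‖∫ x in (0:ℝ)..π, Complex.cos (z ^ (1/2 : ℂ) * x) *
            (↑(if x ≤ a then (1:ℝ) else (π - x) / (π - a)) : ℂ) *
            Complex.cos ((n : ℂ) * x)‖)
      S Filter.atTop K := by
  obtain ⟨R, hR⟩ := hK.isBounded.exists_norm_le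
  have hsqrt : ∀ z ∈ K, ‖z ^ (1 / 2 : ℂ)‖ ≤ √R := fun z hz => by
    rw [Complex.norm_cpow_one_half]
    exact Real.sqrt_le_sqrt (hR z hz)
  set C := 16 * Real.exp (√R * π) / (π * (π - a)) with hC
  refine ⟨_, tendstoUniformlyOn_tsum_nat_eventually
    ((Real.summable_one_div_nat_pow.2 one_lt_two).mul_left C) ?_⟩
  filter_upwards [Filter.eventually_gt_atTop 0, Filter.eventually_ge_atTop ⌈2 * √R⌉₊]
    with n hn hnR z hz
  have hw : 2 * ‖z ^ (1 / 2 : ℂ)‖ ≤ n :=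
    (mul_le_mul_of_nonneg_left (hsqrt z hz) zero_le_two).trans (Nat.ceil_le.1 hnR)
  have hI := norm_integral_cos_mul_ramp_mul_cos_le ha0.le haπ _ (Nat.cast_pos.2 hn) hw
  rw [Complex.ofReal_natCast] at hI
  have hexp : Real.exp (|(z ^ (1 / 2 : ℂ)).im| * π) ≤ Real.exp (√R * π) := by
    gcongr
    exact (Complex.abs_im_le_norm _).trans (hsqrt z hz)
  have hπa := sub_pos.2 haπ
  rw [if_neg hn.ne', Real.norm_of_nonneg (by positivity)]
  calc 1 / (π / 2) * ‖_‖ ≤ 2 / π * (8 * Real.exp (√R * π) / (n ^ 2 * (π - a))) := by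
        rw [one_div_div]
        gcongr
        exact hI.trans (by gcongr)
    _ = C * (1 / n ^ 2) := by
        rw [hC]
        field_simp
        ring
end

section
/- Let b > π and set k̊_n(z) := ∫₀^π cos(nx) cos(√z x) dx, c_0 := π and c_n := π/2 for n ≥ 1. Then for every compact set K ⊂ ℂ the series Σ_{n=0}^∞ (1/c_n) |k̊_n(z)| converges uniformly for z ∈ K; consequently, for each z ∈ ℂ the series Σ_{n=0}^∞ (k̊_n(z)/c_n) cos(nx) converges absolutely, uniformly with respect to x ∈ [0,b]. -/
/-!
By the product-to-sum formula, `∫₀^π cos(nx) cos(wx) dx = -w cos(nπ) sin(wπ) / (n² - w²)`, so for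
`|w| ≤ R` and `n > 2R` the coefficient is at most `4R e^{πR} / n²`. Since `|√z| = √|z|` is bounded
on a compact set, this gives a summable majorant `C / n²` uniform in `z`, and the Weierstrass M-test
yields both claims (with `|cos(nx)| ≤ 1` for real `x`).
-/

open MeasureTheory Real Set

open Filter

namespace Complex

theorem norm_sin_le_exp_norm (z : ℂ) : ‖sin z‖ ≤ Real.exp ‖z‖ := by
  have h₁ := norm_exp_le_exp_norm (z * I)
  have h₂ := norm_exp_le_exp_norm (-z * I)
  simp only [norm_mul, norm_neg, norm_I, mul_one] at h₁ h₂
  rw [sin, norm_div, norm_mul, norm_I, mul_one, Complex.norm_two]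
  linarith [norm_sub_le (exp (-z * I)) (exp (z * I))]

theorem norm_cos_natCast_mul_ofReal_le_one (n : ℕ) (x : ℝ) : ‖cos (n * x)‖ ≤ 1 := by
  rw [← ofReal_natCast, ← ofReal_mul, ← ofReal_cos, norm_real]
  exact abs_cos_le_one _

theorem norm_cpow_one_half_s5 (z : ℂ) : ‖z ^ (1 / 2 : ℂ)‖ = √‖z‖ := by
  rw [show (1 / 2 : ℂ) = ((1 / 2 : ℝ) : ℂ) by push_cast; rfl, norm_cpow_real, Real.sqrt_eq_rpow]

theorem integral_cos_natCast_mul_mul_cos_mul {n : ℕ} {w : ℂ} (hadd : (n : ℂ) + w ≠ 0)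
    (hsub : (n : ℂ) - w ≠ 0) :
    ∫ x in (0 : ℝ)..π, cos (n * x) * cos (w * x) =
      -(w * cos (n * π) * sin (w * π)) / ((n + w) * (n - w)) := by
  have h_prod (x : ℝ) :
      cos (n * x) * cos (w * x) = (cos ((n + w) * x) + cos ((n - w) * x)) / 2 := by
    simp only [add_mul, sub_mul, cos_add, cos_sub]
    ring
  have h_int (c : ℂ) : IntervalIntegrable (fun x : ℝ => cos (c * x)) volume 0 π := by
    apply Continuous.intervalIntegrable; fun_prop
  simp_rw [h_prod]
  rw [intervalIntegral.integral_div, intervalIntegral.integral_add (h_int _) (h_int _),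
    integral_cos_mul_complex hadd, integral_cos_mul_complex hsub]
  simp only [add_mul, sub_mul, sin_add, sin_sub, sin_nat_mul_pi, ofReal_zero, mul_zero, sin_zero,
    zero_div, sub_zero]
  field_simp
  ring

theorem norm_integral_cos_natCast_mul_mul_cos_mul_le {R : ℝ} {w : ℂ} (hw : ‖w‖ ≤ R) {n : ℕ}
    (hn : 2 * R < n) :
    ‖∫ x in (0 : ℝ)..π, cos (n * x) * cos (w * x)‖ ≤ 4 * R * Real.exp (R * π) / n ^ 2 := by
  have hR : 0 ≤ R := (norm_nonneg w).trans hw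
  have hadd : (n : ℝ) / 2 < ‖(n : ℂ) + w‖ := by
    have := norm_sub_norm_le (n : ℂ) (-w)
    rw [norm_natCast, norm_neg, sub_neg_eq_add] at this
    linarith
  have hsub : (n : ℝ) / 2 < ‖(n : ℂ) - w‖ := by
    have := norm_sub_norm_le (n : ℂ) w
    rw [norm_natCast] at this
    linarith
  have hsin : ‖sin (w * π)‖ ≤ Real.exp (R * π) := by
    refine (norm_sin_le_exp_norm _).trans (Real.exp_le_exp.2 ?_)
    rw [norm_mul, norm_real, Real.norm_of_nonneg pi_pos.le]
    gcongr
  rw [integral_cos_natCast_mul_mul_cos_mul (norm_pos_iff.1 (by linarith))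
    (norm_pos_iff.1 (by linarith)), norm_div, norm_neg, norm_mul, norm_mul, norm_mul]
  calc ‖w‖ * ‖cos (n * π)‖ * ‖sin (w * π)‖ / (‖(n : ℂ) + w‖ * ‖(n : ℂ) - w‖)
      ≤ R * 1 * Real.exp (R * π) / ((n / 2) * (n / 2)) := by
        gcongr
        · have : (0 : ℝ) < n / 2 := by linarith
          positivity
        · exact norm_cos_natCast_mul_ofReal_le_one n π
    _ = 4 * R * Real.exp (R * π) / n ^ 2 := by ring

end Complex

theorem exists_eventually_weighted_coeff_le_div_sq (R : ℝ) :
    ∃ C : ℝ, ∀ᶠ n : ℕ in atTop, ∀ w : ℂ, ‖w‖ ≤ R →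
      1 / (if n = 0 then π else π / 2) *
        ‖∫ x in (0 : ℝ)..π, Complex.cos ((n : ℂ) * x) * Complex.cos (w * x)‖ ≤
        C / n ^ 2 := by
  refine ⟨2 / π * (4 * R * Real.exp (R * π)), ?_⟩
  filter_upwards [tendsto_natCast_atTop_atTop.eventually_gt_atTop (2 * R),
    eventually_ne_atTop 0] with n hn hn0 w hw
  rw [if_neg hn0, one_div_div, mul_div_assoc]
  gcongr
  exact Complex.norm_integral_cos_natCast_mul_mul_cos_mul_le hw hn

theorem summable_const_div_sq (C : ℝ) : Summable fun n : ℕ => C / (n : ℝ) ^ 2 :=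
  (summable_nat_pow_inv.mpr one_lt_two).mul_left C

theorem iSup_norm_cos_natCast_mul_le_one (n : ℕ) (s : Set ℝ) :
    ⨆ x ∈ s, ‖Complex.cos ((n : ℂ) * x)‖ ≤ 1 :=
  Real.iSup_le (fun x => Real.iSup_le
    (fun _ => Complex.norm_cos_natCast_mul_ofReal_le_one n x) zero_le_one) zero_le_one

theorem free_undersampling_hypothesis_general (b : ℝ) :
    (∀ K : Set ℂ, IsCompact K →
      ∃ S : ℂ → ℝ, TendstoUniformlyOn
        (fun (N : ℕ) (z : ℂ) => ∑ n ∈ Finset.range N,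
          (1 / (if n = 0 then π else π / 2)) *
            ‖∫ x in (0:ℝ)..π, Complex.cos ((n : ℂ) * x) * Complex.cos (z ^ (1/2 : ℂ) * x)‖)
        S Filter.atTop K) ∧
    ∀ z : ℂ, Summable (fun n : ℕ =>
      (1 / (if n = 0 then π else π / 2)) *
        ‖∫ x in (0:ℝ)..π, Complex.cos ((n : ℂ) * x) * Complex.cos (z ^ (1/2 : ℂ) * x)‖ *
        ⨆ x ∈ Icc (0:ℝ) b, ‖Complex.cos ((n : ℂ) * x)‖) := by
  refine ⟨fun K hK => ?_, fun z => ?_⟩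
  · obtain ⟨M, hM⟩ := hK.isBounded.exists_norm_le
    obtain ⟨C, hC⟩ := exists_eventually_weighted_coeff_le_div_sq √M
    refine ⟨_, fun v hv => tendsto_finset_range.eventually
      (tendstoUniformlyOn_tsum_of_cofinite_eventually (summable_const_div_sq C) ?_ v hv)⟩
    rw [Nat.cofinite_eq_atTop]
    filter_upwards [hC] with n hn z hz
    rw [Real.norm_of_nonneg (by positivity)]
    exact hn _ ((Complex.norm_cpow_one_half_s5 z).trans_le (Real.sqrt_le_sqrt (hM z hz)))
  · obtain ⟨C, hC⟩ := exists_eventually_weighted_coeff_le_div_sq √‖z‖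
    refine (summable_const_div_sq C).of_norm_bounded_eventually_nat ?_
    filter_upwards [hC] with n hn
    have hsup := iSup_norm_cos_natCast_mul_le_one n (Icc 0 b)
    have hsup₀ : 0 ≤ ⨆ x ∈ Icc 0 b, ‖Complex.cos ((n : ℂ) * x)‖ :=
      Real.iSup_nonneg fun _ => Real.iSup_nonneg fun _ => norm_nonneg _
    rw [Real.norm_of_nonneg (by positivity)]
    calc _ ≤ _ * 1 := mul_le_mul_of_nonneg_left hsup (by positivity)
      _ ≤ C / n ^ 2 := (mul_one _).trans_le (hn _ (Complex.norm_cpow_one_half_s5 z).le)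

/-- Undersampling convergence hypothesis in the free case `V ≡ 0`: with
`k̊ₙ(z) = ∫₀^π cos(nx) cos(√z x) dx`, `c₀ = π`, `cₙ = π/2` (`n ≥ 1`), the series
`Σₙ |k̊ₙ(z)|/cₙ` converges uniformly on each compact `K ⊂ ℂ`; consequently, for each
`z ∈ ℂ` the series `Σₙ (k̊ₙ(z)/cₙ) cos(nx)` converges absolutely, uniformly for
`x ∈ [0,b]`. -/
theorem free_undersampling_hypothesis (b : ℝ) (hb : π < b) :
    (∀ K : Set ℂ, IsCompact K →
      ∃ S : ℂ → ℝ, TendstoUniformlyOn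
        (fun (N : ℕ) (z : ℂ) => ∑ n ∈ Finset.range N,
          (1 / (if n = 0 then π else π / 2)) *
            ‖∫ x in (0:ℝ)..π, Complex.cos ((n : ℂ) * x) * Complex.cos (z ^ (1/2 : ℂ) * x)‖)
        S Filter.atTop K) ∧
    ∀ z : ℂ, Summable (fun n : ℕ =>
      (1 / (if n = 0 then π else π / 2)) *
        ‖∫ x in (0:ℝ)..π, Complex.cos ((n : ℂ) * x) * Complex.cos (z ^ (1/2 : ℂ) * x)‖ *
        ⨆ x ∈ Icc (0:ℝ) b, ‖Complex.cos ((n : ℂ) * x)‖) :=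
  free_undersampling_hypothesis_general b
end

section
/- For every z ∈ ℂ and x ∈ [0,a], the x-derivative of the solution satisfies ∂ₓξ(x,z) = −√z sin(√z x) + ∫₀^x cos(√z (x−y)) V(y) ξ(y,z) dy, and there exists a constant C = C(a,V) > 0 such that |∂ₓξ(x,z) + √z sin(√z x)| ≤ C e^{|Im √z| x} ∫₀^x |V(y)| dy for all z ∈ ℂ and x ∈ [0,a]. -/
/-! For any solution `c` of the free equation `c'' = -z c`, the expression
`c (x - t) ξ' t + c' (x - t) ξ t` has `t`-derivative `c (x - t) V t ξ t`. Integrating over `[0, x]`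
with `c = cos (√z ·)` gives the formula for `ξ'`; with `c = sin (√z ·) / √z` it gives the Volterra
equation `ξ x = cos (√z x) + ∫₀ˣ sin (√z (x - t)) / √z · V t ξ t dt`. On `[0, a]` both kernels are
`O(e^{|Im √z| r})` uniformly in `z`, so Gronwall's inequality applied to
`‖ξ x‖ e^{-|Im √z| x}` gives `‖ξ x‖ ≤ C e^{|Im √z| x}`, and inserting this bound into the formula
for `ξ'` gives the estimate. -/

open MeasureTheory Real Set Filter Topology Interval

theorem LipschitzOnWith.comp_absolutelyContinuousOnInterval {X Y : Type*}
    [PseudoMetricSpace X] [PseudoMetricSpace Y] {φ : X → Y} {K : NNReal} {s : Set X}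
    {f : ℝ → X} {a b : ℝ} (hφ : LipschitzOnWith K φ s)
    (hf : AbsolutelyContinuousOnInterval f a b) (hfs : MapsTo f (uIcc a b) s) :
    AbsolutelyContinuousOnInterval (φ ∘ f) a b := by
  unfold AbsolutelyContinuousOnInterval at hf ⊢
  refine squeeze_zero' (Eventually.of_forall fun _ => Finset.sum_nonneg fun _ _ => dist_nonneg)
    ?_ (by simpa using Tendsto.const_mul (K : ℝ) hf)
  filter_upwards [mem_inf_of_right (mem_principal_self _)] with E hE
  rw [Finset.mul_sum]
  exact Finset.sum_le_sum fun i hi =>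
    hφ.dist_le_mul _ (hfs (hE.1 i hi).1) _ (hfs (hE.1 i hi).2)

theorem LocallyLipschitz.comp_absolutelyContinuousOnInterval {φ : ℝ → ℝ} {f : ℝ → ℝ}
    {a b : ℝ} (hφ : LocallyLipschitz φ) (hf : AbsolutelyContinuousOnInterval f a b) :
    AbsolutelyContinuousOnInterval (φ ∘ f) a b := by
  obtain ⟨M, hM⟩ := hf.exists_bound
  obtain ⟨K, hK⟩ := hφ.locallyLipschitzOn.exists_lipschitzOnWith_of_compact
    (isCompact_Icc (a := -M) (b := M))
  exact hK.comp_absolutelyContinuousOnInterval hf fun x hx => abs_le.mp (hM x hx)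

theorem le_mul_exp_integral_of_le_add_integral {g h : ℝ → ℝ} {a b C : ℝ}
    (hg : IntervalIntegrable g volume a b)
    (hgh : IntervalIntegrable (fun t => g t * h t) volume a b)
    (hg0 : ∀ t ∈ Icc a b, 0 ≤ g t)
    (hle : ∀ x ∈ Icc a b, h x ≤ C + ∫ t in a..x, g t * h t) :
    ∀ x ∈ Icc a b, h x ≤ C * exp (∫ t in a..x, g t) := by
  intro x hx
  -- `(C + ∫ g h) e^{-∫ g}` is absolutely continuous with a.e. nonpositive derivative.
  set W := fun y => ∫ t in a..y, g t
  set U := fun y => C + ∫ t in a..y, g t * h t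
  have ha : a ∈ uIcc a b := left_mem_uIcc
  have hE : AbsolutelyContinuousOnInterval (fun y => exp (-W y)) a b :=
    (by fun_prop : ContDiff ℝ 1 fun w => exp (-w)).locallyLipschitz
      |>.comp_absolutelyContinuousOnInterval (hg.absolutelyContinuousOnInterval_intervalIntegral ha)
  have hU : AbsolutelyContinuousOnInterval (fun y => U y * exp (-W y)) a b :=
    ((LipschitzWith.const C).lipschitzOnWith.absolutelyContinuousOnInterval.add
      (hgh.absolutelyContinuousOnInterval_intervalIntegral ha)).fun_mul hE
  have hderiv : ∀ᵐ y, y ∈ uIcc a b →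
      HasDerivAt (fun y => U y * exp (-W y)) (g y * (h y - U y) * exp (-W y)) y := by
    filter_upwards [hg.ae_hasDerivAt_integral, hgh.ae_hasDerivAt_integral] with y hWy hUy hy
    refine (((hUy hy a ha).const_add C).fun_mul (hWy hy a ha).fun_neg.exp).congr_deriv ?_
    ring
  have hnonpos : ∫ y in a..x, deriv (fun y => U y * exp (-W y)) y ≤ 0 := by
    rw [intervalIntegral.integral_of_le hx.1]
    refine setIntegral_nonpos_of_ae_restrict ?_
    filter_upwards [ae_restrict_of_ae hderiv, ae_restrict_mem measurableSet_Ioc] with y hy' hyx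
    have hy : y ∈ Icc a b := ⟨hyx.1.le, hyx.2.trans hx.2⟩
    rw [(hy' (Icc_subset_uIcc hy)).deriv]
    exact mul_nonpos_of_nonpos_of_nonneg
      (mul_nonpos_of_nonneg_of_nonpos (hg0 y hy) (sub_nonpos.2 (hle y hy))) (exp_pos _).le
  rw [(hU.mono (uIcc_subset_uIcc ha (Icc_subset_uIcc hx))).integral_deriv_eq_sub] at hnonpos
  calc h x ≤ U x := hle x hx
    _ = U x * exp (-W x) * exp (W x) := by rw [mul_assoc, ← exp_add]; simp
    _ ≤ C * exp (W x) := by gcongr; simpa [U, W] using hnonpos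

namespace Complex

theorem norm_cos_le_exp_abs_im_s13 (w : ℂ) : ‖cos w‖ ≤ Real.exp |w.im| := by
  calc ‖cos w‖ = ‖exp (w * I) + exp (-w * I)‖ / 2 := by simp [cos]
    _ ≤ (‖exp (w * I)‖ + ‖exp (-w * I)‖) / 2 := by gcongr; exact norm_add_le _ _
    _ = (Real.exp (-w.im) + Real.exp w.im) / 2 := by simp [norm_exp]
    _ ≤ Real.exp |w.im| := by
      linarith [Real.exp_le_exp.2 (neg_le_abs w.im), Real.exp_le_exp.2 (le_abs_self w.im)]

theorem norm_cos_mul_ofReal_le_s13 (s : ℂ) {r : ℝ} (hr : 0 ≤ r) :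
    ‖cos (s * r)‖ ≤ Real.exp (|s.im| * r) := by
  simpa [abs_mul, abs_of_nonneg hr] using norm_cos_le_exp_abs_im_s13 (s * r)

theorem hasDerivAt_cos_mul_ofReal (s : ℂ) (r : ℝ) :
    HasDerivAt (fun r : ℝ => cos (s * r)) (-sin (s * r) * s) r := by
  simpa using ((hasDerivAt_id (r : ℂ)).const_mul s).ccos.comp_ofReal

theorem hasDerivAt_sin_mul_ofReal (s : ℂ) (r : ℝ) :
    HasDerivAt (fun r : ℝ => sin (s * r)) (cos (s * r) * s) r := by
  simpa using ((hasDerivAt_id (r : ℂ)).const_mul s).csin.comp_ofReal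

end Complex

/-- `sin (s r) / s`, including its limit `r` at `s = 0`. -/
noncomputable def sinDiv (s : ℂ) (r : ℝ) : ℂ := ∫ u in (0:ℝ)..r, Complex.cos (s * u)

theorem hasDerivAt_sinDiv (s : ℂ) (r : ℝ) : HasDerivAt (sinDiv s) (Complex.cos (s * r)) r :=
  (Continuous.integral_hasStrictDerivAt (by fun_prop) 0 r).hasDerivAt

theorem mul_sinDiv (s : ℂ) (r : ℝ) : s * sinDiv s r = Complex.sin (s * r) := by
  rw [sinDiv, ← intervalIntegral.integral_const_mul,
    intervalIntegral.integral_eq_sub_of_hasDerivAt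
      (fun u _ => (Complex.hasDerivAt_sin_mul_ofReal s u).congr_deriv (mul_comm _ _))
      ((by fun_prop : Continuous fun u : ℝ => s * Complex.cos (s * u)).intervalIntegrable _ _)]
  simp

theorem norm_sinDiv_le (s : ℂ) {r : ℝ} (hr : 0 ≤ r) :
    ‖sinDiv s r‖ ≤ r * Real.exp (|s.im| * r) := by
  have hbound : ∀ u ∈ Ι 0 r, ‖Complex.cos (s * u)‖ ≤ Real.exp (|s.im| * r) := by
    intro u hu
    rw [uIoc_of_le hr] at hu
    exact (Complex.norm_cos_mul_ofReal_le_s13 s hu.1.le).trans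
      (Real.exp_le_exp.2 (mul_le_mul_of_nonneg_left hu.2 (abs_nonneg _)))
  simpa [sinDiv, abs_of_nonneg hr, mul_comm] using
    intervalIntegral.norm_integral_le_of_norm_le_const hbound

theorem variation_of_constants {q ξ ξ' : ℝ → ℂ} {z : ℂ} {a : ℝ} (hq : IntegrableOn q (Icc 0 a))
    (hξ : ∀ t ∈ Icc 0 a, HasDerivWithinAt ξ (ξ' t) (Icc 0 a) t)
    (hξ' : ∀ t ∈ Icc 0 a, HasDerivWithinAt ξ' ((q t - z) * ξ t) (Icc 0 a) t)
    {c c' : ℝ → ℂ} (hc : ∀ r, HasDerivAt c (c' r) r) (hc' : ∀ r, HasDerivAt c' (-(z * c r)) r)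
    {x : ℝ} (hx : x ∈ Icc 0 a) :
    ∫ t in (0:ℝ)..x, c (x - t) * q t * ξ t =
      c 0 * ξ' x + c' 0 * ξ x - (c x * ξ' 0 + c' x * ξ 0) := by
  have hsub : Icc 0 x ⊆ Icc 0 a := Icc_subset_Icc_right hx.2
  have hξc : ContinuousOn ξ (Icc 0 x) :=
    fun t ht => (hξ t (hsub ht)).continuousWithinAt.mono hsub
  have hξ'c : ContinuousOn ξ' (Icc 0 x) :=
    fun t ht => (hξ' t (hsub ht)).continuousWithinAt.mono hsub
  have hcc : Continuous fun t => c (x - t) :=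
    (continuous_iff_continuousAt.2 fun r => (hc r).continuousAt).comp (by fun_prop)
  have hc'c : Continuous fun t => c' (x - t) :=
    (continuous_iff_continuousAt.2 fun r => (hc' r).continuousAt).comp (by fun_prop)
  rw [intervalIntegral.integral_eq_sub_of_hasDeriv_right_of_le hx.1
    (f := fun t => c (x - t) * ξ' t + c' (x - t) * ξ t)
    ((hcc.continuousOn.mul hξ'c).add (hc'c.continuousOn.mul hξc))]
  · simp
  · intro t ht
    have hnhds : Icc 0 a ∈ 𝓝 t := Icc_mem_nhds ht.1 (ht.2.trans_le hx.2)
    have hta : t ∈ Icc 0 a := hsub (Ioo_subset_Icc_self ht)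
    refine HasDerivAt.hasDerivWithinAt ?_
    refine ((((hc (x - t)).comp_const_sub x t).fun_mul ((hξ' t hta).hasDerivAt hnhds)).fun_add
      (((hc' (x - t)).comp_const_sub x t).fun_mul ((hξ t hta).hasDerivAt hnhds))).congr_deriv ?_
    ring
  · rw [intervalIntegrable_iff_integrableOn_Icc_of_le hx.1]
    exact (IntegrableOn.continuousOn_mul hcc.continuousOn (hq.mono_set hsub) isCompact_Icc)
      |>.mul_continuousOn hξc isCompact_Icc

structure IsCosineTypeSolution (q : ℝ → ℂ) (z : ℂ) (a : ℝ) (ξ ξ' : ℝ → ℂ) : Prop where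
  apply_zero : ξ 0 = 1
  deriv_zero : ξ' 0 = 0
  hasDerivWithinAt : ∀ t ∈ Icc 0 a, HasDerivWithinAt ξ (ξ' t) (Icc 0 a) t
  hasDerivWithinAt_deriv : ∀ t ∈ Icc 0 a, HasDerivWithinAt ξ' ((q t - z) * ξ t) (Icc 0 a) t

namespace IsCosineTypeSolution

variable {q ξ ξ' : ℝ → ℂ} {z s : ℂ} {a x : ℝ}

theorem continuousOn (h : IsCosineTypeSolution q z a ξ ξ') : ContinuousOn ξ (Icc 0 a) :=
  fun t ht => (h.hasDerivWithinAt t ht).continuousWithinAt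

theorem eq_cos_add_integral (h : IsCosineTypeSolution q z a ξ ξ') (hq : IntegrableOn q (Icc 0 a))
    (hs : s * s = z) (hx : x ∈ Icc 0 a) :
    ξ x = Complex.cos (s * x) + ∫ t in (0:ℝ)..x, sinDiv s (x - t) * q t * ξ t := by
  have hc' (r : ℝ) : HasDerivAt (fun r : ℝ => Complex.cos (s * r)) (-(z * sinDiv s r)) r := by
    refine (Complex.hasDerivAt_cos_mul_ofReal s r).congr_deriv ?_
    rw [← hs, mul_assoc, mul_sinDiv]
    ring
  rw [variation_of_constants hq h.hasDerivWithinAt h.hasDerivWithinAt_deriv (hasDerivAt_sinDiv s)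
    hc' hx]
  simp [sinDiv, h.apply_zero, h.deriv_zero]

theorem deriv_eq_neg_sin_add_integral (h : IsCosineTypeSolution q z a ξ ξ')
    (hq : IntegrableOn q (Icc 0 a)) (hs : s * s = z) (hx : x ∈ Icc 0 a) :
    ξ' x = -s * Complex.sin (s * x) +
      ∫ t in (0:ℝ)..x, Complex.cos (s * ((x : ℂ) - (t : ℂ))) * q t * ξ t := by
  have hc' (r : ℝ) : HasDerivAt (fun r : ℝ => -Complex.sin (s * r) * s)
      (-(z * Complex.cos (s * r))) r := by
    refine (Complex.hasDerivAt_sin_mul_ofReal s r).neg.mul_const s |>.congr_deriv ?_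
    rw [← hs]
    ring
  have := variation_of_constants hq h.hasDerivWithinAt h.hasDerivWithinAt_deriv
    (Complex.hasDerivAt_cos_mul_ofReal s) hc' hx
  push_cast at this
  rw [this, h.apply_zero, h.deriv_zero, mul_zero, Complex.cos_zero, Complex.sin_zero]
  ring

theorem norm_mul_exp_le_one_add_integral (h : IsCosineTypeSolution q z a ξ ξ')
    (hq : IntegrableOn q (Icc 0 a)) (hs : s * s = z) (hx : x ∈ Icc 0 a) :
    ‖ξ x‖ * exp (-(|s.im| * x)) ≤
      1 + ∫ t in (0:ℝ)..x, a * ‖q t‖ * (‖ξ t‖ * exp (-(|s.im| * t))) := by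
  set τ := |s.im|
  have hsub : Icc 0 x ⊆ Icc 0 a := Icc_subset_Icc_right hx.2
  have hpointwise : ∀ t ∈ Ioc 0 x, ‖sinDiv s (x - t) * q t * ξ t‖ ≤
      exp (τ * x) * (a * ‖q t‖ * (‖ξ t‖ * exp (-(τ * t)))) := by
    intro t ht
    have hker : ‖sinDiv s (x - t)‖ ≤ a * exp (τ * (x - t)) :=
      (norm_sinDiv_le s (sub_nonneg.2 ht.2)).trans
        (by gcongr; linarith [ht.1, hx.2])
    calc ‖sinDiv s (x - t) * q t * ξ t‖ = ‖sinDiv s (x - t)‖ * ‖q t‖ * ‖ξ t‖ := by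
          rw [norm_mul, norm_mul]
      _ ≤ a * exp (τ * (x - t)) * ‖q t‖ * ‖ξ t‖ := by gcongr
      _ = exp (τ * x) * (a * ‖q t‖ * (‖ξ t‖ * exp (-(τ * t)))) := by
          rw [mul_sub, sub_eq_add_neg, exp_add]
          ring
  have hbound_int : IntervalIntegrable
      (fun t => exp (τ * x) * (a * ‖q t‖ * (‖ξ t‖ * exp (-(τ * t))))) volume 0 x := by
    rw [intervalIntegrable_iff_integrableOn_Icc_of_le hx.1]
    refine (IntegrableOn.mul_continuousOn ((hq.mono_set hsub).norm.const_mul a) ?_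
      isCompact_Icc).const_mul _
    exact (h.continuousOn.mono hsub).norm.mul (by fun_prop)
  have hint := intervalIntegral.norm_integral_le_of_norm_le hx.1
    (ae_of_all _ hpointwise) hbound_int
  rw [intervalIntegral.integral_const_mul] at hint
  have hcos : ‖Complex.cos (s * x)‖ ≤ exp (τ * x) := Complex.norm_cos_mul_ofReal_le_s13 s hx.1
  have hξx : ‖ξ x‖ ≤ exp (τ * x) * (1 + ∫ t in (0:ℝ)..x,
      a * ‖q t‖ * (‖ξ t‖ * exp (-(τ * t)))) := by
    rw [h.eq_cos_add_integral hq hs hx]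
    linarith [norm_add_le (Complex.cos (s * x)) (∫ t in (0:ℝ)..x, sinDiv s (x - t) * q t * ξ t)]
  calc ‖ξ x‖ * exp (-(τ * x))
      ≤ exp (τ * x) * (1 + ∫ t in (0:ℝ)..x, a * ‖q t‖ * (‖ξ t‖ * exp (-(τ * t)))) *
          exp (-(τ * x)) := by gcongr
    _ = _ := by rw [mul_comm, ← mul_assoc, ← exp_add, neg_add_cancel, exp_zero, one_mul]

theorem norm_le (h : IsCosineTypeSolution q z a ξ ξ') (hq : IntegrableOn q (Icc 0 a))
    (hs : s * s = z) (hx : x ∈ Icc 0 a) :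
    ‖ξ x‖ ≤ exp (a * ∫ t in (0:ℝ)..a, ‖q t‖) * exp (|s.im| * x) := by
  have ha : 0 ≤ a := hx.1.trans hx.2
  have hg : IntervalIntegrable (fun t => a * ‖q t‖) volume 0 a :=
    ((intervalIntegrable_iff_integrableOn_Icc_of_le ha).2 hq).norm.const_mul a
  have hgh : IntervalIntegrable (fun t => a * ‖q t‖ * (‖ξ t‖ * exp (-(|s.im| * t))))
      volume 0 a := by
    rw [intervalIntegrable_iff_integrableOn_Icc_of_le ha]
    exact IntegrableOn.mul_continuousOn (hq.norm.const_mul a)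
      (h.continuousOn.norm.mul (by fun_prop)) isCompact_Icc
  have hgron := le_mul_exp_integral_of_le_add_integral hg hgh
    (fun _ _ => mul_nonneg ha (norm_nonneg _))
    (fun y hy => h.norm_mul_exp_le_one_add_integral hq hs hy) x hx
  have hmono : ∫ t in (0:ℝ)..x, a * ‖q t‖ ≤ a * ∫ t in (0:ℝ)..a, ‖q t‖ := by
    rw [← intervalIntegral.integral_const_mul]
    exact intervalIntegral.integral_mono_interval le_rfl hx.1 hx.2
      (ae_of_all _ fun t => mul_nonneg ha (norm_nonneg _)) hg
  calc ‖ξ x‖ = ‖ξ x‖ * exp (-(|s.im| * x)) * exp (|s.im| * x) := by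
        rw [mul_assoc, ← exp_add, neg_add_cancel, exp_zero, mul_one]
    _ ≤ 1 * exp (∫ t in (0:ℝ)..x, a * ‖q t‖) * exp (|s.im| * x) := by gcongr
    _ ≤ exp (a * ∫ t in (0:ℝ)..a, ‖q t‖) * exp (|s.im| * x) := by
        rw [one_mul]; gcongr

theorem norm_deriv_add_sin_le (h : IsCosineTypeSolution q z a ξ ξ')
    (hq : IntegrableOn q (Icc 0 a)) (hs : s * s = z) (hx : x ∈ Icc 0 a) :
    ‖ξ' x + s * Complex.sin (s * x)‖ ≤
      exp (a * ∫ t in (0:ℝ)..a, ‖q t‖) * exp (|s.im| * x) * ∫ t in (0:ℝ)..x, ‖q t‖ := by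
  set M := exp (a * ∫ t in (0:ℝ)..a, ‖q t‖)
  set τ := |s.im|
  have hpointwise : ∀ t ∈ Ioc 0 x,
      ‖Complex.cos (s * ((x : ℂ) - (t : ℂ))) * q t * ξ t‖ ≤ M * exp (τ * x) * ‖q t‖ := by
    intro t ht
    have hcos : ‖Complex.cos (s * ((x : ℂ) - (t : ℂ)))‖ ≤ exp (τ * (x - t)) := by
      simpa using Complex.norm_cos_mul_ofReal_le_s13 s (sub_nonneg.2 ht.2)
    calc ‖Complex.cos (s * ((x : ℂ) - (t : ℂ))) * q t * ξ t‖
        ≤ exp (τ * (x - t)) * ‖q t‖ * (M * exp (τ * t)) := by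
          rw [norm_mul, norm_mul]
          gcongr
          exact h.norm_le hq hs ⟨ht.1.le, ht.2.trans hx.2⟩
      _ = M * exp (τ * x) * ‖q t‖ := by
          rw [mul_sub, exp_sub]
          field_simp
  have hq_int : IntervalIntegrable (fun t => ‖q t‖) volume 0 x :=
    ((intervalIntegrable_iff_integrableOn_Icc_of_le hx.1).2
      (hq.mono_set (Icc_subset_Icc_right hx.2))).norm
  rw [h.deriv_eq_neg_sin_add_integral hq hs hx, neg_mul, neg_add_cancel_comm,
    ← intervalIntegral.integral_const_mul]
  exact intervalIntegral.norm_integral_le_of_norm_le hx.1 (ae_of_all _ hpointwise)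
    (hq_int.const_mul _)

end IsCosineTypeSolution

theorem xi_derivative_formula_and_estimate_general
    (a : ℝ)
    (V : ℝ → ℝ)
    (hV : IntegrableOn V (Icc 0 a))
    (ξ ξ' : ℂ → ℝ → ℂ)
    (hξ0 : ∀ z, ξ z 0 = 1)
    (hξ'0 : ∀ z, ξ' z 0 = 0)
    (hξd : ∀ z, ∀ x ∈ Icc (0:ℝ) a, HasDerivWithinAt (ξ z) (ξ' z x) (Icc 0 a) x)
    (hξd' : ∀ z, ∀ x ∈ Icc (0:ℝ) a,
      HasDerivWithinAt (ξ' z) (((V x : ℂ) - z) * ξ z x) (Icc 0 a) x)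
    : (∀ z : ℂ, ∀ x ∈ Icc (0:ℝ) a,
        ξ' z x = -(z ^ (1/2 : ℂ)) * Complex.sin (z ^ (1/2 : ℂ) * x) +
          ∫ y in (0:ℝ)..x,
            Complex.cos (z ^ (1/2 : ℂ) * ((x : ℂ) - (y : ℂ))) * (V y : ℂ) * ξ z y) ∧
      ∃ C > 0, ∀ z : ℂ, ∀ x ∈ Icc (0:ℝ) a,
        ‖ξ' z x + z ^ (1/2 : ℂ) * Complex.sin (z ^ (1/2 : ℂ) * x)‖ ≤
          C * Real.exp (|(z ^ (1/2 : ℂ)).im| * x) * ∫ y in (0:ℝ)..x, |V y| := by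
  have hsol (z : ℂ) : IsCosineTypeSolution (fun t => (V t : ℂ)) z a (ξ z) (ξ' z) :=
    ⟨hξ0 z, hξ'0 z, hξd z, hξd' z⟩
  have hq : IntegrableOn (fun t => (V t : ℂ)) (Icc 0 a) := hV.ofReal
  have hsqrt (z : ℂ) : z ^ (1/2 : ℂ) * z ^ (1/2 : ℂ) = z := by
    rw [← sq, one_div]
    exact_mod_cast Complex.cpow_nat_inv_pow z two_ne_zero
  refine ⟨fun z x hx => (hsol z).deriv_eq_neg_sin_add_integral hq (hsqrt z) hx,
    exp (a * ∫ t in (0:ℝ)..a, |V t|), exp_pos _, fun z x hx => ?_⟩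
  simpa using (hsol z).norm_deriv_add_sin_le hq (hsqrt z) hx

/-- The derivative of the solution satisfies
`∂ₓξ(x,z) = −√z sin(√z x) + ∫₀^x cos(√z (x−y)) V(y) ξ(y,z) dy` and the estimate
`|∂ₓξ(x,z) + √z sin(√z x)| ≤ C e^{|Im √z| x} ∫₀^x |V(y)| dy` on `[0,a]`. -/
theorem xi_derivative_formula_and_estimate
    (a : ℝ) (ha : 0 < a)
    (V : ℝ → ℝ)
    (hV : IntegrableOn V (Icc 0 a))
    (ξ ξ' : ℂ → ℝ → ℂ)
    (hξ0 : ∀ z, ξ z 0 = 1)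
    (hξ'0 : ∀ z, ξ' z 0 = 0)
    (hξd : ∀ z, ∀ x ∈ Icc (0:ℝ) a, HasDerivWithinAt (ξ z) (ξ' z x) (Icc 0 a) x)
    (hξd' : ∀ z, ∀ x ∈ Icc (0:ℝ) a,
      HasDerivWithinAt (ξ' z) (((V x : ℂ) - z) * ξ z x) (Icc 0 a) x)
    : (∀ z : ℂ, ∀ x ∈ Icc (0:ℝ) a,
        ξ' z x = -(z ^ (1/2 : ℂ)) * Complex.sin (z ^ (1/2 : ℂ) * x) +
          ∫ y in (0:ℝ)..x,
            Complex.cos (z ^ (1/2 : ℂ) * ((x : ℂ) - (y : ℂ))) * (V y : ℂ) * ξ z y) ∧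
      ∃ C > 0, ∀ z : ℂ, ∀ x ∈ Icc (0:ℝ) a,
        ‖ξ' z x + z ^ (1/2 : ℂ) * Complex.sin (z ^ (1/2 : ℂ) * x)‖ ≤
          C * Real.exp (|(z ^ (1/2 : ℂ)).im| * x) * ∫ y in (0:ℝ)..x, |V y| :=
  xi_derivative_formula_and_estimate_general a V hV ξ ξ' hξ0 hξ'0 hξd hξd'
end

section
/- Let a ∈ (0,π). For every n ∈ ℕ ∪ {0} and every z ∈ ℂ \ {n²}: ∫₀^π cos(√z x) R_{aπ}(x) cos(nx) dx = (1/(2(π−a))) · [ (cos((√z+n)a) − (−1)ⁿ cos(√z π))/(√z+n)² + (cos((√z−n)a) − (−1)ⁿ cos(√z π))/(√z−n)² ]. -/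
open MeasureTheory Real Set

/-!
Writing `cos (√z x) cos (n x)` as half the sum of `cos ((√z ± n) x)` reduces the integral to
`∫₀^π cos (c x) R(x) dx` with `c = √z ± n ≠ 0`. As `R` is `1` on `[0, a]` and affine on `[a, π]`,
integrating by parts gives `(cos (c a) - cos (c π)) / (c² (π - a))`: the boundary terms
`sin (c a) / c` of the two pieces cancel. Finally `cos ((√z ± n) π) = (-1)ⁿ cos (√z π)`.
-/

/-- The weight `R_{aπ}`. -/
noncomputable def rampWeight (a x : ℝ) : ℝ := if x ≤ a then 1 else (π - x) / (π - a)

lemma rampWeight_of_le {a x : ℝ} (h : x ≤ a) : rampWeight a x = 1 := if_pos h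

lemma rampWeight_of_ge {a x : ℝ} (ha : a ≠ π) (h : a ≤ x) :
    rampWeight a x = (π - x) / (π - a) := by
  rcases h.eq_or_lt with rfl | h
  · rw [rampWeight_of_le le_rfl, div_self (sub_ne_zero.mpr ha.symm)]
  · exact if_neg h.not_ge

lemma continuous_rampWeight {a : ℝ} (ha : a ≠ π) : Continuous (rampWeight a) :=
  Continuous.if_le continuous_const (by fun_prop) continuous_id continuous_const
    fun x hx => by rw [hx, div_self (sub_ne_zero.mpr ha.symm)]

lemma hasDerivAt_sub_mul_sin_sub_cos {c : ℂ} (hc : c ≠ 0) (b y : ℂ) :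
    HasDerivAt (fun y => (b - y) * Complex.sin (c * y) / c - Complex.cos (c * y) / c ^ 2)
      (Complex.cos (c * y) * (b - y)) y := by
  have hlin : HasDerivAt (fun y => c * y) c y := by simpa using (hasDerivAt_id y).const_mul c
  refine ((((hasDerivAt_id y).const_sub b).mul ((Complex.hasDerivAt_sin _).comp y hlin)).div_const
    c).sub (((Complex.hasDerivAt_cos _).comp y hlin).div_const (c ^ 2)) |>.congr_deriv ?_
  simp only [Function.comp_apply, id]
  field_simp
  ring

lemma integral_cos_mul_sub_complex {c : ℂ} (hc : c ≠ 0) (a b : ℝ) :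
    ∫ x in a..b, Complex.cos (c * x) * (b - x) =
      (Complex.cos (c * a) - Complex.cos (c * b)) / c ^ 2 - (b - a) * Complex.sin (c * a) / c := by
  rw [intervalIntegral.integral_eq_sub_of_hasDerivAt
    (fun x _ => (hasDerivAt_sub_mul_sin_sub_cos hc b x).comp_ofReal)
    (Continuous.intervalIntegrable (by fun_prop) _ _)]
  ring

lemma integral_cos_mul_rampWeight {a : ℝ} (ha0 : 0 ≤ a) (haπ : a < π) {c : ℂ} (hc : c ≠ 0) :
    ∫ x in (0:ℝ)..π, Complex.cos (c * x) * rampWeight a x =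
      (Complex.cos (c * a) - Complex.cos (c * π)) / (c ^ 2 * (π - a)) := by
  have hπa : (π : ℂ) - a ≠ 0 := by exact_mod_cast (sub_pos.mpr haπ).ne'
  have hint : ∀ s t : ℝ, IntervalIntegrable (fun x : ℝ => Complex.cos (c * x) * rampWeight a x)
      volume s t := fun s t =>
    (by have := continuous_rampWeight haπ.ne; fun_prop : Continuous _).intervalIntegrable s t
  have hflat : ∫ x in (0:ℝ)..a, Complex.cos (c * x) * rampWeight a x =
      ∫ x in (0:ℝ)..a, Complex.cos (c * x) := by
    refine intervalIntegral.integral_congr fun x hx => ?_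
    rw [uIcc_of_le ha0] at hx
    simp [rampWeight_of_le hx.2]
  have hslope : ∫ x in a..π, Complex.cos (c * x) * rampWeight a x =
      (∫ x in a..π, Complex.cos (c * x) * (π - x)) / (π - a) := by
    rw [← intervalIntegral.integral_div]
    refine intervalIntegral.integral_congr fun x hx => ?_
    rw [uIcc_of_le haπ.le] at hx
    simp only [rampWeight_of_ge haπ.ne hx.1]
    push_cast
    ring
  rw [← intervalIntegral.integral_add_adjacent_intervals (hint 0 a) (hint a π), hflat, hslope,
    integral_cos_mul_complex hc, integral_cos_mul_sub_complex hc, Complex.ofReal_zero, mul_zero, Complex.sin_zero]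
  field_simp
  ring

lemma Complex.cos_nat_mul_pi (n : ℕ) : Complex.cos (n * π) = (-1) ^ n := by
  exact_mod_cast congrArg ((↑) : ℝ → ℂ) (Real.cos_nat_mul_pi n)

lemma Complex.cos_add_nat_mul_pi (x : ℂ) (n : ℕ) :
    Complex.cos (x + n * π) = (-1) ^ n * Complex.cos x := by
  rw [Complex.cos_add, Complex.cos_nat_mul_pi, Complex.sin_nat_mul_pi]
  ring

lemma Complex.cos_sub_nat_mul_pi (x : ℂ) (n : ℕ) :
    Complex.cos (x - n * π) = (-1) ^ n * Complex.cos x := by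
  rw [Complex.cos_sub, Complex.cos_nat_mul_pi, Complex.sin_nat_mul_pi]
  ring

lemma integral_cos_mul_rampWeight_mul_cos_nat {a : ℝ} (ha0 : 0 ≤ a) (haπ : a < π) {w : ℂ} {n : ℕ}
    (hw : w ^ 2 ≠ n ^ 2) :
    ∫ x in (0:ℝ)..π, Complex.cos (w * x) * rampWeight a x * Complex.cos (n * x) =
      1 / (2 * (π - a)) *
        ((Complex.cos ((w + n) * a) - (-1) ^ n * Complex.cos (w * π)) / (w + n) ^ 2 +
          (Complex.cos ((w - n) * a) - (-1) ^ n * Complex.cos (w * π)) / (w - n) ^ 2) := by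
  have hπa : (π : ℂ) - a ≠ 0 := by exact_mod_cast (sub_pos.mpr haπ).ne'
  have hwn : (w + n) * (w - n) ≠ 0 := by
    rwa [← sq_sub_sq, sub_ne_zero]
  have hint : ∀ c : ℂ, IntervalIntegrable (fun x : ℝ => Complex.cos (c * x) * rampWeight a x)
      volume 0 π := fun c =>
    (by have := continuous_rampWeight haπ.ne; fun_prop : Continuous _).intervalIntegrable 0 π
  have hprod : ∀ x : ℝ, Complex.cos (w * x) * rampWeight a x * Complex.cos (n * x) =
      (Complex.cos ((w + n) * x) * rampWeight a x + Complex.cos ((w - n) * x) * rampWeight a x) / 2 := by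
    intro x
    rw [add_mul, sub_mul, Complex.cos_add, Complex.cos_sub]
    ring
  simp_rw [hprod]
  rw [intervalIntegral.integral_div, intervalIntegral.integral_add (hint _) (hint _),
    integral_cos_mul_rampWeight ha0 haπ (left_ne_zero_of_mul hwn),
    integral_cos_mul_rampWeight ha0 haπ (right_ne_zero_of_mul hwn),
    add_mul w _ (π : ℂ), sub_mul w _ (π : ℂ), Complex.cos_add_nat_mul_pi, Complex.cos_sub_nat_mul_pi]
  field_simp

/-- Explicit value of `∫₀^π cos(√z x) R_{aπ}(x) cos(nx) dx` for `a ∈ (0,π)`,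
`n ∈ ℕ ∪ {0}` and `z ∈ ℂ \ {n²}`. -/
theorem free_inner_product_formula
    (a : ℝ) (ha0 : 0 < a) (haπ : a < π) :
    ∀ n : ℕ, ∀ z : ℂ, z ≠ (n : ℂ) ^ 2 →
      (∫ x in (0:ℝ)..π, Complex.cos (z ^ (1/2 : ℂ) * x) *
          (↑(if x ≤ a then (1:ℝ) else (π - x) / (π - a)) : ℂ) *
          Complex.cos ((n : ℂ) * x)) =
        (1 / (2 * ((π : ℂ) - (a : ℂ)))) *
          ((Complex.cos ((z ^ (1/2 : ℂ) + n) * a) -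
              (-1 : ℂ) ^ n * Complex.cos (z ^ (1/2 : ℂ) * π)) /
              (z ^ (1/2 : ℂ) + n) ^ 2 +
            (Complex.cos ((z ^ (1/2 : ℂ) - n) * a) -
              (-1 : ℂ) ^ n * Complex.cos (z ^ (1/2 : ℂ) * π)) /
              (z ^ (1/2 : ℂ) - n) ^ 2) := by
  intro n z hz
  have hsq : (z ^ (1/2 : ℂ)) ^ 2 = z := by
    rw [one_div, Complex.cpow_ofNat_inv_pow]
  exact integral_cos_mul_rampWeight_mul_cos_nat ha0.le haπ (by rwa [hsq])
end

section
/- Let a ∈ (0,π). There exists a constant C > 0 (depending on V) such that for every z ∈ ℂ and every n ∈ ℕ: |∫₀^π F(x,z) R_{aπ}(x) cos(nx) dx| ≤ C (e^{π|Im √z|}/n²) (1 + (1 + |z|)/(1 + π|z|^{1/2})). -/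
/-!
Write `z = w²` with `w = z ^ (1/2)`. For `F = ξ - cos (w ·)` one has `F'' = V ξ - w² F`, and the
energy `|F'|² + (1 + |w|²) |F|²` grows at most like `e^{2 |Im w| x}` by Gronwall's inequality,
because `‖|w|² - w²‖ = 2 |w| |Im w|`; the same estimate applied to `ξ` itself first bounds `ξ`.
Hence `|F|`, `|F'|` and `|w| |F|` are `O(e^{π |Im w|})` on `[0, π]`, and
`|F''| = O((1 + |w|) e^{π |Im w|})`.
Integrating by parts twice against `cos (n x)` on `[0, a]` and on `[a, π]`, where `R_{aπ}` is affine
and vanishes at `π`, gains the factor `n⁻²` and leaves only `F''`, `F'` and boundary values of `F`.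
Finally `|w| ≤ (1 + π) (1 + |w|²) / (1 + π |w|)`.
-/

open MeasureTheory Real Set

open ComplexConjugate

theorem le_mul_exp_of_hasDerivWithinAt {f f' : ℝ → ℝ} {L b c : ℝ}
    (hf : ∀ x ∈ Icc 0 L, HasDerivWithinAt f (f' x) (Icc 0 L) x)
    (hbound : ∀ x ∈ Ioo 0 L, f' x ≤ c * f x + b * exp (c * x)) {x : ℝ} (hx : x ∈ Icc 0 L) :
    f x ≤ (f 0 + b * x) * exp (c * x) := by
  -- `(f 0 + b x) e^{cx}` solves `f' = c f + b e^{cx}`, so `f e^{-cx} - b x` is antitone.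
  have hanti : AntitoneOn (fun y => f y * exp (-(c * y)) - b * y) (Icc 0 L) := by
    refine antitoneOn_of_hasDerivWithinAt_nonpos (convex_Icc 0 L)
      (f' := fun y => (f' y - c * f y) * exp (-(c * y)) - b) ?_ ?_ ?_ <;> try rw [interior_Icc]
    · exact ((HasDerivWithinAt.continuousOn hf).mul (by fun_prop)).sub (by fun_prop)
    · intro y hy
      have hfy := (hf y (Ioo_subset_Icc_self hy)).hasDerivAt (Icc_mem_nhds hy.1 hy.2)
      have hexp := ((hasDerivAt_id y).const_mul c).neg.exp
      refine (((hfy.mul hexp).sub ((hasDerivAt_id y).const_mul b)).congr_deriv ?_).hasDerivWithinAt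
      simp only [id, Pi.neg_apply]; ring
    · intro y hy
      have hy' := mul_le_mul_of_nonneg_right (sub_le_iff_le_add'.2 (hbound y hy))
        (exp_pos (-(c * y))).le
      rw [mul_assoc, ← exp_add, add_neg_cancel, exp_zero, mul_one] at hy'
      linarith
  have h := hanti ⟨le_rfl, hx.1.trans hx.2⟩ hx hx.1
  simp only [mul_zero, neg_zero, exp_zero, mul_one, sub_zero] at h
  calc f x = (f x * exp (-(c * x))) * exp (c * x) := by
        rw [mul_assoc, ← exp_add, neg_add_cancel, exp_zero, mul_one]
    _ ≤ (f 0 + b * x) * exp (c * x) := by gcongr; linarith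

theorem norm_ofReal_norm_sq_sub_sq (w : ℂ) : ‖((‖w‖ ^ 2 : ℝ) : ℂ) - w ^ 2‖ = 2 * ‖w‖ * |w.im| := by
  have h : ((‖w‖ ^ 2 : ℝ) : ℂ) - w ^ 2 = -w * (w - conj w) := by
    push_cast; rw [← Complex.mul_conj']; ring
  rw [h, Complex.sub_conj, norm_mul, norm_neg, norm_mul, Complex.norm_I, Complex.norm_real,
    norm_mul, Real.norm_two, Real.norm_eq_abs]
  ring

noncomputable def waveEnergy (w : ℂ) (u v : ℝ → ℂ) (x : ℝ) : ℝ :=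
  ‖v x‖ ^ 2 + (1 + ‖w‖ ^ 2) * ‖u x‖ ^ 2

theorem waveEnergy_deriv_le (w p q g : ℂ) {A β : ℝ} (hA : 0 ≤ A)
    (hg : ‖g‖ ≤ A * ‖p‖ + β) :
    2 * inner ℝ q (g - w ^ 2 * p) + (1 + ‖w‖ ^ 2) * (2 * inner ℝ p q)
      ≤ (A + 2 + 2 * |w.im|) * (‖q‖ ^ 2 + (1 + ‖w‖ ^ 2) * ‖p‖ ^ 2) + β ^ 2 := by
  have hsplit : 2 * inner ℝ q (g - w ^ 2 * p) + (1 + ‖w‖ ^ 2) * (2 * inner ℝ p q)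
      = 2 * inner ℝ q g + 2 * inner ℝ q ((1 + ((‖w‖ ^ 2 : ℝ) : ℂ) - w ^ 2) * p) := by
    simp only [Complex.inner, Complex.mul_re, Complex.sub_re, Complex.add_re, Complex.sub_im,
      Complex.add_im, Complex.mul_im, Complex.conj_re, Complex.conj_im, Complex.ofReal_re,
      Complex.ofReal_im, Complex.one_re, Complex.one_im]
    ring
  have hgq : inner ℝ q g ≤ ‖q‖ * (A * ‖p‖ + β) :=
    (real_inner_le_norm q g).trans (by gcongr)
  have hwq : inner ℝ q ((1 + ((‖w‖ ^ 2 : ℝ) : ℂ) - w ^ 2) * p)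
      ≤ ‖q‖ * ((1 + 2 * ‖w‖ * |w.im|) * ‖p‖) := by
    refine (real_inner_le_norm _ _).trans (mul_le_mul_of_nonneg_left ?_ (norm_nonneg q))
    rw [norm_mul, add_sub_assoc]
    gcongr
    exact (norm_add_le _ _).trans (by rw [norm_one, norm_ofReal_norm_sq_sub_sq])
  rw [hsplit]
  -- AM-GM on each cross term: `2 A pq ≤ A (p² + q²)`, `2 βq ≤ β² + q²`, `2 pq ≤ p² + q²`,
  -- `4 |Im w| |w| pq ≤ 2 |Im w| (q² + |w|² p²)`.
  nlinarith [mul_nonneg hA (sq_nonneg (‖p‖ - ‖q‖)), sq_nonneg (‖q‖ - β), sq_nonneg (‖p‖ - ‖q‖),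
    mul_nonneg (abs_nonneg w.im) (sq_nonneg (‖w‖ * ‖p‖ - ‖q‖)),
    mul_nonneg hA (sq_nonneg (‖w‖ * ‖p‖)), mul_nonneg (abs_nonneg w.im) (sq_nonneg ‖p‖),
    norm_nonneg p, norm_nonneg q, abs_nonneg w.im]

theorem waveEnergy_le {w : ℂ} {u v g : ℝ → ℂ} {L A B : ℝ} (hA : 0 ≤ A)
    (hu : ∀ x ∈ Icc 0 L, HasDerivWithinAt u (v x) (Icc 0 L) x)
    (hv : ∀ x ∈ Icc 0 L, HasDerivWithinAt v (g x - w ^ 2 * u x) (Icc 0 L) x)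
    (hg : ∀ x ∈ Icc 0 L, ‖g x‖ ≤ A * ‖u x‖ + B * exp (|w.im| * x)) {x : ℝ} (hx : x ∈ Icc 0 L) :
    waveEnergy w u v x ≤ (waveEnergy w u v 0 + B ^ 2 * x) * exp ((A + 2 + 2 * |w.im|) * x) := by
  refine le_mul_exp_of_hasDerivWithinAt (fun y hy => ((hv y hy).norm_sq).add
    (((hu y hy).norm_sq).const_mul (1 + ‖w‖ ^ 2))) (fun y hy => ?_) hx
  have hy := Ioo_subset_Icc_self hy
  have hexp : (B * exp (|w.im| * y)) ^ 2 ≤ B ^ 2 * exp ((A + 2 + 2 * |w.im|) * y) := by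
    rw [mul_pow, ← exp_nat_mul]
    refine mul_le_mul_of_nonneg_left (exp_le_exp.2 ?_) (sq_nonneg B)
    push_cast
    nlinarith [abs_nonneg w.im, hy.1]
  exact (waveEnergy_deriv_le w (u y) (v y) (g y) hA (hg y hy)).trans (by
    simp only [Pi.add_apply]; linarith)

theorem norm_le_of_waveEnergy_le {w : ℂ} {u v : ℝ → ℂ} {x B : ℝ} (hB : 0 ≤ B)
    (h : waveEnergy w u v x ≤ B ^ 2) : ‖v x‖ ≤ B ∧ ‖u x‖ ≤ B ∧ ‖w‖ * ‖u x‖ ≤ B := by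
  unfold waveEnergy at h
  have hu := sq_nonneg ‖u x‖
  have hwu := sq_nonneg (‖w‖ * ‖u x‖)
  refine ⟨le_of_pow_le_pow_left₀ two_ne_zero hB ?_, le_of_pow_le_pow_left₀ two_ne_zero hB ?_,
    le_of_pow_le_pow_left₀ two_ne_zero hB ?_⟩ <;> nlinarith [sq_nonneg ‖v x‖]

theorem hasDerivAt_cos_mul_ofReal (c : ℂ) (x : ℝ) :
    HasDerivAt (fun y : ℝ => Complex.cos (c * y)) (-Complex.sin (c * x) * c) x := by
  simpa using ((Complex.hasDerivAt_cos _).comp _ ((hasDerivAt_id _).const_mul c)).comp_ofReal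

theorem hasDerivAt_sin_mul_ofReal (c : ℂ) (x : ℝ) :
    HasDerivAt (fun y : ℝ => Complex.sin (c * y)) (Complex.cos (c * x) * c) x := by
  simpa using ((Complex.hasDerivAt_sin _).comp _ ((hasDerivAt_id _).const_mul c)).comp_ofReal

-- `u = ξ(·, w²)`: the solution of `-u'' + V u = w² u` with the initial data of `cos (w ·)`.
structure IsCosineSolution (V : ℝ → ℝ) (L : ℝ) (w : ℂ) (u u' : ℝ → ℂ) : Prop where
  hasDerivWithinAt : ∀ x ∈ Icc 0 L, HasDerivWithinAt u (u' x) (Icc 0 L) x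
  hasDerivWithinAt_deriv : ∀ x ∈ Icc 0 L, HasDerivWithinAt u' ((V x - w ^ 2) * u x) (Icc 0 L) x
  apply_zero : u 0 = 1
  deriv_zero : u' 0 = 0

namespace IsCosineSolution

variable {V : ℝ → ℝ} {L M : ℝ} {w : ℂ} {u u' : ℝ → ℂ} (hsol : IsCosineSolution V L w u u')
include hsol

theorem norm_le (hM : ∀ x ∈ Icc 0 L, ‖V x‖ ≤ M) {x : ℝ} (hx : x ∈ Icc 0 L) :
    ‖u x‖ ≤ exp ((M + 2) * L / 2) * exp (|w.im| * x) := by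
  have hM0 : 0 ≤ M := (norm_nonneg _).trans (hM 0 ⟨le_rfl, hx.1.trans hx.2⟩)
  have hE := waveEnergy_le hM0 (B := 0) (g := fun y => V y * u y) hsol.hasDerivWithinAt
    (fun y hy => (hsol.hasDerivWithinAt_deriv y hy).congr_deriv (by ring))
    (fun y hy => by simpa [norm_mul] using mul_le_mul_of_nonneg_right (hM y hy) (norm_nonneg _))
    hx
  simp only [waveEnergy, hsol.apply_zero, hsol.deriv_zero, norm_zero, norm_one] at hE
  refine le_of_pow_le_pow_left₀ two_ne_zero (by positivity) ?_
  rw [mul_pow, ← exp_nat_mul, ← exp_nat_mul, ← exp_add]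
  have hexp : exp ((M + 2 + 2 * |w.im|) * x) ≤ exp (↑2 * ((M + 2) * L / 2) + ↑2 * (|w.im| * x)) :=
    exp_le_exp.2 (by nlinarith [hx.1, hx.2, abs_nonneg w.im])
  nlinarith [sq_nonneg ‖u' x‖, sq_nonneg ‖w‖, sq_nonneg ‖u x‖, exp_pos ((M + 2 + 2 * |w.im|) * x)]

theorem hasDerivWithinAt_sub_cos : ∀ x ∈ Icc 0 L,
    HasDerivWithinAt (fun y => u y - Complex.cos (w * y)) (u' x + Complex.sin (w * x) * w)
      (Icc 0 L) x := fun x hx =>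
  ((hsol.hasDerivWithinAt x hx).sub
    (hasDerivAt_cos_mul_ofReal w x).hasDerivWithinAt).congr_deriv (by ring)

theorem hasDerivWithinAt_deriv_add_sin : ∀ x ∈ Icc 0 L,
    HasDerivWithinAt (fun y => u' y + Complex.sin (w * y) * w)
      (V x * u x - w ^ 2 * (u x - Complex.cos (w * x))) (Icc 0 L) x := fun x hx =>
  ((hsol.hasDerivWithinAt_deriv x hx).add
    ((hasDerivAt_sin_mul_ofReal w x).mul_const w).hasDerivWithinAt).congr_deriv (by ring)

theorem waveEnergy_sub_cos_le (hM : ∀ x ∈ Icc 0 L, ‖V x‖ ≤ M) {x : ℝ} (hx : x ∈ Icc 0 L) :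
    waveEnergy w (fun y => u y - Complex.cos (w * y)) (fun y => u' y + Complex.sin (w * y) * w) x
      ≤ (M * exp ((M + 2) * L / 2) * √L * exp L * exp (|w.im| * x)) ^ 2 := by
  have hL : 0 ≤ L := hx.1.trans hx.2
  have hM0 : 0 ≤ M := (norm_nonneg _).trans (hM 0 ⟨le_rfl, hL⟩)
  have hE := waveEnergy_le le_rfl (B := M * exp ((M + 2) * L / 2)) (g := fun y => V y * u y)
    (u := fun y => u y - Complex.cos (w * y)) (v := fun y => u' y + Complex.sin (w * y) * w)
    hsol.hasDerivWithinAt_sub_cos hsol.hasDerivWithinAt_deriv_add_sin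
    (fun y hy => by
      rw [norm_mul, Complex.norm_real, zero_mul, zero_add, mul_assoc]
      exact mul_le_mul (hM y hy) (hsol.norm_le hM hy) (norm_nonneg _) hM0)
    hx
  simp only [waveEnergy, hsol.apply_zero, hsol.deriv_zero, Complex.ofReal_zero, mul_zero,
    Complex.cos_zero, Complex.sin_zero, sub_self, zero_mul, norm_zero, ne_eq, OfNat.ofNat_ne_zero,
    not_false_eq_true, zero_pow, add_zero, zero_add] at hE
  have hexp : exp ((2 + 2 * |w.im|) * x) ≤ exp L ^ 2 * exp (|w.im| * x) ^ 2 := by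
    rw [← exp_nat_mul, ← exp_nat_mul, ← exp_add]
    exact exp_le_exp.2 (by push_cast; nlinarith [hx.1, hx.2, abs_nonneg w.im])
  calc _ ≤ _ := hE
    _ ≤ (M * exp ((M + 2) * L / 2)) ^ 2 * L * (exp L ^ 2 * exp (|w.im| * x) ^ 2) :=
        mul_le_mul (by gcongr; exact hx.2) hexp (exp_pos _).le (by positivity)
    _ = _ := by simp only [mul_pow, sq_sqrt hL]; ring

end IsCosineSolution

theorem sq_mul_integral_mul_cos {h h' h'' : ℝ → ℂ} {α β : ℝ} (c : ℂ) (hαβ : α ≤ β)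
    (hh : ∀ x ∈ Icc α β, HasDerivWithinAt h (h' x) (Icc α β) x)
    (hh' : ∀ x ∈ Icc α β, HasDerivWithinAt h' (h'' x) (Icc α β) x)
    (hint : IntervalIntegrable h'' volume α β) :
    c ^ 2 * ∫ x in α..β, h x * Complex.cos (c * x)
      = c * (h β * Complex.sin (c * β) - h α * Complex.sin (c * α))
        + (h' β * Complex.cos (c * β) - h' α * Complex.cos (c * α))
        - ∫ x in α..β, h'' x * Complex.cos (c * x) := by
  have hcont := HasDerivWithinAt.continuousOn hh
  have hcont' := HasDerivWithinAt.continuousOn hh'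
  have hcos : ContinuousOn (fun x : ℝ => Complex.cos (c * x)) (uIcc α β) := by fun_prop
  have hint₀ : IntervalIntegrable (fun x => h x * Complex.cos (c * x)) volume α β :=
    (hcont.mul (hcos.mono (uIcc_of_le hαβ).ge)).intervalIntegrable_of_Icc hαβ
  have hint₂ : IntervalIntegrable (fun x => h'' x * Complex.cos (c * x)) volume α β :=
    hint.mul_continuousOn hcos
  -- `c h sin(cx) + h' cos(cx)` is a primitive of `(c² h + h'') cos(cx)`.
  have hftc := intervalIntegral.integral_eq_sub_of_hasDerivAt_of_le hαβ
    (f := fun x => c * h x * Complex.sin (c * x) + h' x * Complex.cos (c * x))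
    (f' := fun x => c ^ 2 * (h x * Complex.cos (c * x)) + h'' x * Complex.cos (c * x))
    ((continuousOn_const.mul hcont).mul (by fun_prop) |>.add (hcont'.mul (by fun_prop)))
    (fun x hx => by
      have hmem := Icc_mem_nhds hx.1 hx.2
      have hx := Ioo_subset_Icc_self hx
      refine ((((hh x hx).hasDerivAt hmem).const_mul c).mul (hasDerivAt_sin_mul_ofReal c x)
        |>.add (((hh' x hx).hasDerivAt hmem).mul (hasDerivAt_cos_mul_ofReal c x))).congr_deriv ?_
      ring)
    ((hint₀.const_mul _).add hint₂)
  rw [intervalIntegral.integral_add (hint₀.const_mul _) hint₂,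
    intervalIntegral.integral_const_mul] at hftc
  linear_combination hftc

noncomputable def trapezoidWeight (a x : ℝ) : ℝ := if x ≤ a then 1 else (π - x) / (π - a)

theorem continuous_trapezoidWeight {a : ℝ} (haπ : a < π) : Continuous (trapezoidWeight a) :=
  Continuous.if_le continuous_const (by fun_prop) continuous_id continuous_const
    fun x hx => by rw [hx, div_self (sub_pos.2 haπ).ne']

theorem norm_cos_ofReal_mul_le_one (c x : ℝ) : ‖Complex.cos (c * x)‖ ≤ 1 := by
  rw [← Complex.ofReal_mul, ← Complex.ofReal_cos, Complex.norm_real, norm_eq_abs]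
  exact abs_cos_le_one _

theorem norm_integral_mul_cos_le {f : ℝ → ℂ} {α β B : ℝ} (c : ℝ) (hαβ : α ≤ β)
    (hf : ∀ x ∈ Ioc α β, ‖f x‖ ≤ B) :
    ‖∫ x in α..β, f x * Complex.cos (c * x)‖ ≤ B * (β - α) := by
  refine (intervalIntegral.norm_integral_le_of_norm_le_const fun x hx => ?_).trans_eq
    (by rw [abs_of_nonneg (sub_nonneg.2 hαβ)])
  rw [uIoc_of_le hαβ] at hx
  rw [norm_mul]
  exact (mul_le_of_le_one_right (norm_nonneg _) (norm_cos_ofReal_mul_le_one c x)).trans (hf x hx)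

section TrapezoidCoefficient

variable {F F' F'' : ℝ → ℂ} {a : ℝ}
  (hF : ∀ x ∈ Icc 0 π, HasDerivWithinAt F (F' x) (Icc 0 π) x)
  (hF' : ∀ x ∈ Icc 0 π, HasDerivWithinAt F' (F'' x) (Icc 0 π) x)
  (hF'' : IntervalIntegrable F'' volume 0 π) (hF0 : F 0 = 0) (hF'0 : F' 0 = 0)
  (ha0 : 0 ≤ a) (haπ : a < π)
include hF hF' hF'' hF0 hF'0 ha0 haπ

theorem sq_mul_integral_trapezoidWeight_mul_cos (c : ℂ) :
    c ^ 2 * ∫ x in 0..π, F x * (trapezoidWeight a x : ℂ) * Complex.cos (c * x)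
      = (F a * Complex.cos (c * a) - F π * Complex.cos (c * π)) / (π - a)
        - (∫ x in 0..a, F'' x * Complex.cos (c * x))
        - ∫ x in a..π, (F'' x * ((π - x) / (π - a) : ℝ) - 2 * F' x / (π - a))
            * Complex.cos (c * x) := by
  have hπa : π - a ≠ 0 := (sub_pos.2 haπ).ne'
  have hleft : Icc 0 a ⊆ Icc 0 π := Icc_subset_Icc le_rfl haπ.le
  have hright : Icc a π ⊆ Icc 0 π := Icc_subset_Icc ha0 le_rfl
  have hleft' : uIcc 0 a ⊆ uIcc 0 π := by rwa [uIcc_of_le ha0, uIcc_of_le pi_pos.le]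
  have hright' : uIcc a π ⊆ uIcc 0 π := by rwa [uIcc_of_le haπ.le, uIcc_of_le pi_pos.le]
  have hT : ∀ x : ℝ, HasDerivAt (fun y : ℝ => (((π - y) / (π - a) : ℝ) : ℂ)) (-1 / (π - a)) x :=
    fun x => by
      simpa [div_eq_mul_inv] using (((hasDerivAt_id x).const_sub π).div_const (π - a)).ofReal_comp
  have hint : IntervalIntegrable
      (fun x => F x * (trapezoidWeight a x : ℂ) * Complex.cos (c * x)) volume 0 π :=
    (((HasDerivWithinAt.continuousOn hF).mul
      (Complex.continuous_ofReal.comp (continuous_trapezoidWeight haπ)).continuousOn).mul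
      (by fun_prop)).intervalIntegrable_of_Icc pi_pos.le
  rw [← intervalIntegral.integral_add_adjacent_intervals (hint.mono_set hleft')
      (hint.mono_set hright'),
    intervalIntegral.integral_congr (a := 0) (b := a) (g := fun x => F x * Complex.cos (c * x))
      (fun x hx => by rw [uIcc_of_le ha0] at hx; simp [trapezoidWeight, hx.2]),
    intervalIntegral.integral_congr (a := a) (b := π)
      (g := fun x => F x * (((π - x) / (π - a) : ℝ) : ℂ) * Complex.cos (c * x)) (fun x hx => by
        rw [uIcc_of_le haπ.le] at hx
        rcases hx.1.eq_or_lt with rfl | hax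
        · simp [trapezoidWeight, hπa]
        · simp [trapezoidWeight, not_le.2 hax])]
  have hleftIBP := sq_mul_integral_mul_cos c ha0 (fun x hx => (hF x (hleft hx)).mono hleft)
    (fun x hx => (hF' x (hleft hx)).mono hleft) (hF''.mono_set hleft')
  have hrightIBP := sq_mul_integral_mul_cos c haπ.le
    (h := fun x => F x * (((π - x) / (π - a) : ℝ) : ℂ))
    (h' := fun x => F' x * (((π - x) / (π - a) : ℝ) : ℂ) + F x * (-1 / (π - a)))
    (h'' := fun x => F'' x * (((π - x) / (π - a) : ℝ) : ℂ) - 2 * F' x / (π - a))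
    (fun x hx => ((hF x (hright hx)).mono hright).mul (hT x).hasDerivWithinAt)
    (fun x hx => ((((hF' x (hright hx)).mono hright).mul (hT x).hasDerivWithinAt).add
      (((hF x (hright hx)).mono hright).mul_const _)).congr_deriv (by ring))
    (((hF''.mono_set hright').mul_continuousOn (by fun_prop)).sub
      ((((HasDerivWithinAt.continuousOn hF').mono hright).intervalIntegrable_of_Icc
        haπ.le).const_mul 2 |>.div_const _))
  -- The `c sin (c x)` boundary terms cancel at `a` and vanish at `π`: the weight is continuous
  -- at `a` and vanishes at `π`.
  rw [mul_add, hleftIBP, hrightIBP, hF0, hF'0]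
  simp only [sub_self, zero_div, div_self hπa, Complex.ofReal_zero, Complex.ofReal_one]
  ring

theorem sq_mul_norm_integral_trapezoidWeight_mul_cos_le {B₀ B₂ : ℝ} (c : ℝ)
    (hB₀ : ∀ x ∈ Icc 0 π, ‖F x‖ ≤ B₀ ∧ ‖F' x‖ ≤ B₀) (hB₂ : ∀ x ∈ Icc 0 π, ‖F'' x‖ ≤ B₂) :
    c ^ 2 * ‖∫ x in 0..π, F x * (trapezoidWeight a x : ℂ) * Complex.cos (c * x)‖
      ≤ π * B₂ + 2 * B₀ + 2 * B₀ / (π - a) := by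
  have hπa := sub_pos.2 haπ
  have hnorm_cos (p : ℂ) (x : ℝ) : ‖p * Complex.cos (c * x)‖ ≤ ‖p‖ := by
    rw [norm_mul]; exact mul_le_of_le_one_right (norm_nonneg p) (norm_cos_ofReal_mul_le_one c x)
  have hboundary : ‖(F a * Complex.cos (c * a) - F π * Complex.cos (c * π)) / (π - a)‖
      ≤ 2 * B₀ / (π - a) := by
    rw [norm_div, show ((π : ℂ) - a) = ((π - a : ℝ) : ℂ) by push_cast; ring, Complex.norm_real,
      norm_of_nonneg hπa.le]
    gcongr
    refine (norm_sub_le _ _).trans ?_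
    linarith [(hnorm_cos (F a) a).trans (hB₀ a ⟨ha0, haπ.le⟩).1,
      (hnorm_cos (F π) π).trans (hB₀ π ⟨pi_pos.le, le_rfl⟩).1]
  have hleft := norm_integral_mul_cos_le c ha0 (f := F'')
    fun x hx => hB₂ x ⟨hx.1.le, hx.2.trans haπ.le⟩
  have hright := norm_integral_mul_cos_le c haπ.le (B := B₂ + 2 * B₀ / (π - a))
    (f := fun x => F'' x * (((π - x) / (π - a) : ℝ) : ℂ) - 2 * F' x / (π - a)) fun x hx => by
      have hx' : x ∈ Icc 0 π := ⟨ha0.trans hx.1.le, hx.2⟩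
      have hT : ‖(((π - x) / (π - a) : ℝ) : ℂ)‖ ≤ 1 := by
        rw [Complex.norm_real, norm_of_nonneg (div_nonneg (sub_nonneg.2 hx.2) hπa.le),
          div_le_one hπa]
        linarith [hx.1]
      refine (norm_sub_le _ _).trans (add_le_add ?_ ?_)
      · rw [norm_mul]; exact (mul_le_of_le_one_right (norm_nonneg _) hT).trans (hB₂ x hx')
      · rw [norm_div, norm_mul, show ((π : ℂ) - a) = ((π - a : ℝ) : ℂ) by push_cast; ring,
          Complex.norm_real, norm_of_nonneg hπa.le, Complex.norm_two]
        gcongr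
        exact (hB₀ x hx').2
  calc c ^ 2 * ‖∫ x in 0..π, F x * (trapezoidWeight a x : ℂ) * Complex.cos (c * x)‖
      = ‖(c : ℂ) ^ 2 * ∫ x in 0..π, F x * (trapezoidWeight a x : ℂ) * Complex.cos (c * x)‖ := by
        rw [norm_mul, norm_pow, Complex.norm_real, norm_eq_abs, sq_abs]
    _ ≤ 2 * B₀ / (π - a) + B₂ * (a - 0) + (B₂ + 2 * B₀ / (π - a)) * (π - a) := by
        rw [sq_mul_integral_trapezoidWeight_mul_cos hF hF' hF'' hF0 hF'0 ha0 haπ]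
        refine (norm_sub_le _ _).trans (add_le_add ((norm_sub_le _ _).trans ?_) hright)
        exact add_le_add hboundary hleft
    _ = π * B₂ + 2 * B₀ + 2 * B₀ / (π - a) := by field_simp; ring

end TrapezoidCoefficient

theorem continuousOn_of_eq_add_integral {V V' : ℝ → ℝ} {L : ℝ} (hL : 0 ≤ L)
    (hV' : IntegrableOn V' (Icc 0 L)) (hV : ∀ x ∈ Icc 0 L, V x = V 0 + ∫ t in 0..x, V' t) :
    ContinuousOn V (Icc 0 L) := by
  have hprim := intervalIntegral.continuousOn_primitive_interval (a := 0) (b := L) (μ := volume)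
    (f := V') (by rwa [uIcc_of_le hL])
  rw [uIcc_of_le hL] at hprim
  exact (continuousOn_const.add hprim).congr hV

theorem exists_sq_mul_norm_integral_trapezoidWeight_le {V : ℝ → ℝ} {a : ℝ}
    (hV : ContinuousOn V (Icc 0 π)) (ha0 : 0 ≤ a) (haπ : a < π) :
    ∃ A B : ℝ, 0 ≤ A ∧ 0 ≤ B ∧ ∀ (w : ℂ) (u u' : ℝ → ℂ), IsCosineSolution V π w u u' →
      ∀ c : ℝ, c ^ 2 * ‖∫ x in 0..π, (u x - Complex.cos (w * x)) * (trapezoidWeight a x : ℂ)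
          * Complex.cos (c * x)‖ ≤ exp (π * |w.im|) * (A + B * ‖w‖) := by
  obtain ⟨M, hM⟩ := isCompact_Icc.exists_bound_of_continuousOn hV
  have hM0 : 0 ≤ M := (norm_nonneg _).trans (hM 0 ⟨le_rfl, pi_pos.le⟩)
  set K := exp ((M + 2) * π / 2)
  set K₂ := M * K * √π * exp π
  have hπa := sub_pos.2 haπ
  refine ⟨π * (M * K) + 2 * K₂ + 2 * K₂ / (π - a), π * K₂, by positivity, by positivity,
    fun w u u' hsol c => ?_⟩
  have hexp : ∀ x ∈ Icc 0 π, exp (|w.im| * x) ≤ exp (π * |w.im|) := fun x hx =>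
    exp_le_exp.2 (by nlinarith [hx.2, abs_nonneg w.im])
  have hF : ∀ x ∈ Icc 0 π, ‖u' x + Complex.sin (w * x) * w‖ ≤ K₂ * exp (|w.im| * x) ∧
      ‖u x - Complex.cos (w * x)‖ ≤ K₂ * exp (|w.im| * x) ∧
      ‖w‖ * ‖u x - Complex.cos (w * x)‖ ≤ K₂ * exp (|w.im| * x) := fun x hx =>
    norm_le_of_waveEnergy_le (by positivity) (hsol.waveEnergy_sub_cos_le hM hx)
  have hF'' : ∀ x ∈ Icc 0 π, ‖V x * u x - w ^ 2 * (u x - Complex.cos (w * x))‖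
      ≤ (M * K + ‖w‖ * K₂) * exp (π * |w.im|) := fun x hx => by
    calc _ ≤ ‖V x‖ * ‖u x‖ + ‖w‖ * (‖w‖ * ‖u x - Complex.cos (w * x)‖) := by
          refine (norm_sub_le _ _).trans_eq ?_
          rw [norm_mul, norm_mul, norm_pow, Complex.norm_real]; ring
      _ ≤ M * (K * exp (|w.im| * x)) + ‖w‖ * (K₂ * exp (|w.im| * x)) := by
          exact add_le_add (mul_le_mul (hM x hx) (hsol.norm_le hM hx) (norm_nonneg _) hM0)
            (mul_le_mul_of_nonneg_left (hF x hx).2.2 (norm_nonneg _))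
      _ ≤ (M * K + ‖w‖ * K₂) * exp (π * |w.im|) := by
          rw [← mul_assoc, ← mul_assoc, ← add_mul]
          exact mul_le_mul_of_nonneg_left (hexp x hx) (by positivity)
  refine (sq_mul_norm_integral_trapezoidWeight_mul_cos_le hsol.hasDerivWithinAt_sub_cos
    hsol.hasDerivWithinAt_deriv_add_sin ?_ (by simp [hsol.apply_zero])
    (by simp [hsol.deriv_zero]) ha0 haπ c (B₀ := K₂ * exp (π * |w.im|)) (fun x hx => ⟨?_, ?_⟩)
    hF'').trans_eq (by ring)
  · have hu := HasDerivWithinAt.continuousOn hsol.hasDerivWithinAt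
    exact ((Complex.continuous_ofReal.comp_continuousOn hV).mul hu |>.sub
      (continuousOn_const.mul (hu.sub (by fun_prop)))).intervalIntegrable_of_Icc pi_pos.le
  · exact (hF x hx).2.1.trans (mul_le_mul_of_nonneg_left (hexp x hx) (by positivity))
  · exact (hF x hx).1.trans (mul_le_mul_of_nonneg_left (hexp x hx) (by positivity))

theorem add_mul_le_mul_one_add_div {A B r : ℝ} (hA : 0 ≤ A) (hB : 0 ≤ B) (hr : 0 ≤ r) :
    A + B * r ≤ (A + (1 + π) * B) * (1 + (1 + r ^ 2) / (1 + π * r)) := by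
  have hD : r ≤ (1 + π) * ((1 + r ^ 2) / (1 + π * r)) := by
    rw [mul_div_assoc', le_div_iff₀ (by positivity)]
    nlinarith [sq_nonneg (r - 1), pi_pos]
  have hD0 : 0 ≤ (1 + r ^ 2) / (1 + π * r) := by positivity
  nlinarith [mul_le_mul_of_nonneg_left hD hB, pi_pos]

theorem oversampling_F_estimate_general
    (V : ℝ → ℝ)
    (hV : ∃ V' : ℝ → ℝ, IntegrableOn V' (Icc 0 π) ∧
      ∀ x ∈ Icc (0:ℝ) π, V x = V 0 + ∫ t in (0:ℝ)..x, V' t)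
    (ξ ξ' : ℂ → ℝ → ℂ)
    (hξ0 : ∀ z, ξ z 0 = 1)
    (hξ'0 : ∀ z, ξ' z 0 = 0)
    (hξd : ∀ z, ∀ x ∈ Icc (0:ℝ) π, HasDerivWithinAt (ξ z) (ξ' z x) (Icc 0 π) x)
    (hξd' : ∀ z, ∀ x ∈ Icc (0:ℝ) π,
      HasDerivWithinAt (ξ' z) (((V x : ℂ) - z) * ξ z x) (Icc 0 π) x)
    (a : ℝ) (ha0 : 0 < a) (haπ : a < π) :
    ∃ C > 0, ∀ z : ℂ, ∀ n : ℕ, 0 < n →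
      ‖∫ x in (0:ℝ)..π,
          (ξ z x - Complex.cos (z ^ (1/2 : ℂ) * x)) *
          (↑(if x ≤ a then (1:ℝ) else (π - x) / (π - a)) : ℂ) *
          Complex.cos ((n : ℂ) * x)‖ ≤
        C * (Real.exp (π * |(z ^ (1/2 : ℂ)).im|) / (n : ℝ) ^ 2) *
          (1 + (1 + ‖z‖) / (1 + π * Real.sqrt ‖z‖)) := by
  obtain ⟨V', hV', hVeq⟩ := hV
  obtain ⟨A, B, hA, hB, hbound⟩ := exists_sq_mul_norm_integral_trapezoidWeight_le
    (continuousOn_of_eq_add_integral pi_pos.le hV' hVeq) ha0.le haπ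
  refine ⟨A + (1 + π) * B + 1, by positivity, fun z n hn => ?_⟩
  have hwz : (z ^ (1 / 2 : ℂ)) ^ 2 = z := by
    rw [show (1 / 2 : ℂ) = ((2 : ℕ) : ℂ)⁻¹ by norm_num]
    exact Complex.cpow_nat_inv_pow z two_ne_zero
  set w := z ^ (1 / 2 : ℂ)
  have hnorm : ‖z‖ = ‖w‖ ^ 2 := by rw [← hwz, norm_pow]
  have hsol : IsCosineSolution V π w (ξ z) (ξ' z) :=
    ⟨hξd z, by rw [hwz]; exact hξd' z, hξ0 z, hξ'0 z⟩
  have h := hbound w _ _ hsol n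
  rw [Complex.ofReal_natCast] at h
  rw [hnorm, sqrt_sq (norm_nonneg w)]
  have hn2 : (0 : ℝ) < (n : ℝ) ^ 2 := by positivity
  calc _ = (n : ℝ) ^ 2 * _ / (n : ℝ) ^ 2 := (mul_div_cancel_left₀ _ hn2.ne').symm
    _ ≤ exp (π * |w.im|) * (A + B * ‖w‖) / (n : ℝ) ^ 2 := div_le_div_of_nonneg_right h hn2.le
    _ ≤ exp (π * |w.im|) * ((A + (1 + π) * B + 1) * (1 + (1 + ‖w‖ ^ 2) / (1 + π * ‖w‖)))
          / (n : ℝ) ^ 2 := by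
        refine div_le_div_of_nonneg_right (mul_le_mul_of_nonneg_left ?_ (exp_pos _).le) hn2.le
        exact (add_mul_le_mul_one_add_div hA hB (norm_nonneg w)).trans
          (mul_le_mul_of_nonneg_right (by linarith) (by positivity))
    _ = _ := by ring

/-- Estimate for `∫₀^π F(x,z) R_{aπ}(x) cos(nx) dx` with
`F(x,z) = ξ(x,z) − cos(√z x)`, for all `z ∈ ℂ` and `n ∈ ℕ`, `n ≥ 1`. -/
theorem oversampling_F_estimate
    (V : ℝ → ℝ)
    (hV : ∃ V' : ℝ → ℝ, IntegrableOn V' (Icc 0 π) ∧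
      ∀ x ∈ Icc (0:ℝ) π, V x = V 0 + ∫ t in (0:ℝ)..x, V' t)
    (ξ ξ' : ℂ → ℝ → ℂ)
    (hξ0 : ∀ z, ξ z 0 = 1)
    (hξ'0 : ∀ z, ξ' z 0 = 0)
    (hξd : ∀ z, ∀ x ∈ Icc (0:ℝ) π, HasDerivWithinAt (ξ z) (ξ' z x) (Icc 0 π) x)
    (hξd' : ∀ z, ∀ x ∈ Icc (0:ℝ) π,
      HasDerivWithinAt (ξ' z) (((V x : ℂ) - z) * ξ z x) (Icc 0 π) x)
    (hent : ∀ x ∈ Icc (0:ℝ) π, Differentiable ℂ (fun z => ξ z x))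
    (hreal : ∀ (r x : ℝ), (ξ (r : ℂ) x).im = 0)
    (lam : ℕ → ℝ)
    (hmono : StrictMono lam)
    (hspec : ∀ r : ℝ, ξ' (r : ℂ) π = 0 ↔ ∃ n, r = lam n)
    (a : ℝ) (ha0 : 0 < a) (haπ : a < π) :
    ∃ C > 0, ∀ z : ℂ, ∀ n : ℕ, 0 < n →
      ‖∫ x in (0:ℝ)..π,
          (ξ z x - Complex.cos (z ^ (1/2 : ℂ) * x)) *
          (↑(if x ≤ a then (1:ℝ) else (π - x) / (π - a)) : ℂ) *
          Complex.cos ((n : ℂ) * x)‖ ≤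
        C * (Real.exp (π * |(z ^ (1/2 : ℂ)).im|) / (n : ℝ) ^ 2) *
          (1 + (1 + ‖z‖) / (1 + π * Real.sqrt ‖z‖)) :=
  oversampling_F_estimate_general V hV ξ ξ' hξ0 hξ'0 hξd hξd' a ha0 haπ
end
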